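/- arXiv:2009.10696 — 5 statements merged into one kernel-verified Lean document; each statement's English description precedes it below -/
import Mathlib

section
/- Let H = (V, E) be a finite connected graph with injective edge weights b : E → [0, ∞), and let T be its unique minimum spanning tree. Fix u ∈ [0, ∞), let E^u = {e ∈ E : b(e) ≤ u}, and let C be a connected component of the graph (V, E^u). Then every path in T joining two vertices of C lies entirely inside C, and the set of edges of T having both endpoints in C is exactly the edge set of the minimum spanning tree of C with respect to the restriction of b to the edges of C. -/
/-!
Cut property: if `e` is an edge of the minimum spanning tree `T` and `f` is an edge of `G` joining
the two components of `T - e`, then `b e ≤ b f`, since otherwise `T - e + f` would be a lighter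
spanning tree. Consequently every edge on the `T`-path between two vertices joined by a walk of
edges of weight `≤ u` has weight `≤ u`: `T`-paths between vertices of `C` stay in `C`, and the
edges of `T` inside `C` span `C`. For a spanning tree `S` of `C`, replacing the edges of `T`
inside `C` by `S` gives a connected spanning subgraph of `G`, which is at least as heavy as `T`;
cancelling the common edges outside `C` compares `T` restricted to `C` with `S`.
-/

open scoped Classical

noncomputable section

variable {V : Type} [Fintype V] [DecidableEq V]

/-- `T` is a spanning tree of the graph `G` (on the same vertex set). -/
def IsSpanningTree (G T : SimpleGraph V) : Prop :=
  T ≤ G ∧ T.Connected ∧ T.IsAcyclic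

/-- The total weight `Σ_{e ∈ T} b(e)` of the edges of `T`. -/
def treeWeight (T : SimpleGraph V) (b : Sym2 V → ℝ) : ℝ :=
  ∑ e : Sym2 V, if e ∈ T.edgeSet then b e else 0

/-- The percolated graph `(V, E^u)` keeping only the edges of `G` of weight at most `u`. -/
def percGraph (G : SimpleGraph V) (b : Sym2 V → ℝ) (u : ℝ) : SimpleGraph V where
  Adj x y := G.Adj x y ∧ b s(x, y) ≤ u
  symm := by
    constructor
    intro x y h
    refine ⟨h.1.symm, ?_⟩
    rw [Sym2.eq_swap]
    exact h.2
  loopless := ⟨fun x h => h.1.ne rfl⟩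

/-- The restriction of `T` to the connected component `C` of `Gu`: keep exactly the edges of
`T` with both endpoints in `C`. -/
def restrictToComp (T Gu : SimpleGraph V) (C : Gu.ConnectedComponent) : SimpleGraph V where
  Adj x y := T.Adj x y ∧ Gu.connectedComponentMk x = C ∧ Gu.connectedComponentMk y = C
  symm := ⟨fun x y h => ⟨h.1.symm, h.2.2, h.2.1⟩⟩
  loopless := ⟨fun x h => h.1.ne rfl⟩

/-- `S` is a spanning tree of the connected component `C` of `Gu`: it is a subgraph of `Gu`,
acyclic, all its edges have both endpoints in `C`, and it connects any two vertices of `C`. -/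
def IsSpanningTreeOn (Gu S : SimpleGraph V) (C : Gu.ConnectedComponent) : Prop :=
  S ≤ Gu ∧ S.IsAcyclic ∧
  (∀ x y : V, S.Adj x y → Gu.connectedComponentMk x = C ∧ Gu.connectedComponentMk y = C) ∧
  (∀ x y : V, Gu.connectedComponentMk x = C → Gu.connectedComponentMk y = C → S.Reachable x y)

open SimpleGraph

namespace SimpleGraph

variable {α : Type*} {G H : SimpleGraph α}

lemma Reachable.of_forall_adj_reachable (h : ∀ x y, G.Adj x y → H.Reachable x y) {x y : α}
    (hxy : G.Reachable x y) : H.Reachable x y := by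
  rw [reachable_iff_reflTransGen] at hxy ⊢
  exact Relation.reflTransGen_closed (fun x y hxy => (reachable_iff_reflTransGen x y).1 (h x y hxy))
    x y hxy

lemma Reachable.deleteEdges_or {v a : α} (h : G.Reachable v a) (a' : α) :
    (G.deleteEdges {s(a, a')}).Reachable v a ∨ (G.deleteEdges {s(a, a')}).Reachable v a' := by
  obtain ⟨w⟩ := h
  induction w with
  | nil => exact Or.inl .rfl
  | @cons v x a hvx _ ih =>
    by_cases he : s(v, x) = s(a, a')
    · rcases Sym2.eq_iff.mp he with ⟨rfl, -⟩ | ⟨rfl, -⟩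
      · exact Or.inl .rfl
      · exact Or.inr .rfl
    · have hvx' : (G.deleteEdges {s(a, a')}).Adj v x := (deleteEdges_adj ..).2 ⟨hvx, he⟩
      exact ih.imp hvx'.reachable.trans hvx'.reachable.trans

lemma IsAcyclic.not_reachable_deleteEdges_of_mem_edges (hG : G.IsAcyclic) {x y : α}
    {p : G.Walk x y} (hp : p.IsPath) {e : Sym2 α} (he : e ∈ p.edges) :
    ¬ (G.deleteEdges {e}).Reachable x y := by
  induction e using Sym2.ind with
  | _ a a' =>
  rw [reachable_deleteEdges_iff_exists_walk]
  rintro ⟨q, hq⟩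
  have hpq : (⟨p, hp⟩ : G.Path x y) = q.toPath := (hG.subsingleton_path x y).elim _ _
  exact hq (q.edges_toPath_subset_edges (congrArg (fun r : G.Path x y => r.1.edges) hpq ▸ he))

end SimpleGraph

section

omit [Fintype V] [DecidableEq V]

variable {G T : SimpleGraph V} {b : Sym2 V → ℝ}

lemma percGraph_le {u : ℝ} : percGraph G b u ≤ G := fun _ _ h => h.1

lemma mem_edgeSet_percGraph {u : ℝ} {e : Sym2 V} :
    e ∈ (percGraph G b u).edgeSet ↔ e ∈ G.edgeSet ∧ b e ≤ u := by
  induction e using Sym2.ind with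
  | _ x y => exact Iff.rfl

lemma restrictToComp_le {Gu : SimpleGraph V} {C : Gu.ConnectedComponent} :
    restrictToComp T Gu C ≤ T := fun _ _ h => h.1

end

section

omit [DecidableEq V]

variable {G T A B : SimpleGraph V} {b : Sym2 V → ℝ}

lemma treeWeight_sup_of_disjoint (h : Disjoint A.edgeSet B.edgeSet) :
    treeWeight (A ⊔ B) b = treeWeight A b + treeWeight B b := by
  unfold treeWeight
  rw [← Finset.sum_add_distrib]
  refine Finset.sum_congr rfl fun e _ => ?_
  by_cases hA : e ∈ A.edgeSet
  · simp [hA, Set.disjoint_left.1 h hA]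
  · simp [hA]

lemma treeWeight_sdiff_add (h : A ≤ B) :
    treeWeight (B \ A) b + treeWeight A b = treeWeight B b := by
  rw [← treeWeight_sup_of_disjoint (by rw [edgeSet_sdiff]; exact Set.disjoint_sdiff_left),
    sdiff_sup_cancel h]

lemma treeWeight_edge {c c' : V} (h : c ≠ c') : treeWeight (edge c c') b = b s(c, c') := by
  simp [treeWeight, edgeSet_edge_of_ne h]

lemma treeWeight_mono (hAB : A ≤ B) (hb : ∀ e ∈ B.edgeSet, 0 ≤ b e) :
    treeWeight A b ≤ treeWeight B b := by
  refine Finset.sum_le_sum fun e _ => ?_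
  by_cases hA : e ∈ A.edgeSet
  · simp [hA, edgeSet_mono hAB hA]
  · simp only [hA, if_false]
    split_ifs with hB
    exacts [hb e hB, le_rfl]

def IsMinSpanningTree (G T : SimpleGraph V) (b : Sym2 V → ℝ) : Prop :=
  IsSpanningTree G T ∧ ∀ T', IsSpanningTree G T' → treeWeight T b ≤ treeWeight T' b

namespace IsMinSpanningTree

variable (hT : IsMinSpanningTree G T b)
include hT

protected lemma le : T ≤ G := hT.1.1

protected lemma connected : T.Connected := hT.1.2.1

protected lemma isAcyclic : T.IsAcyclic := hT.1.2.2

lemma treeWeight_le_of_connected {H : SimpleGraph V} (hHG : H ≤ G) (hH : H.Connected)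
    (hb : ∀ e ∈ G.edgeSet, 0 ≤ b e) : treeWeight T b ≤ treeWeight H b := by
  obtain ⟨F, hFH, hF⟩ := hH.exists_isTree_le
  exact (hT.2 F ⟨hFH.trans hHG, hF.connected, hF.isAcyclic⟩).trans
    (treeWeight_mono hFH fun e he => hb e (edgeSet_mono hHG he))

lemma le_of_adj_of_not_reachable {a a' c c' : V} (ha : T.Adj a a') (hc : G.Adj c c')
    (hca : (T.deleteEdges {s(a, a')}).Reachable c a)
    (hc'a : ¬ (T.deleteEdges {s(a, a')}).Reachable c' a) : b s(a, a') ≤ b s(c, c') := by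
  obtain ⟨⟨hTG, hTconn, hTacyc⟩, hmin⟩ := hT
  set T₀ := T.deleteEdges {s(a, a')}
  have hc'a' : T₀.Reachable c' a' :=
    ((hTconn.preconnected c' a).deleteEdges_or a').resolve_left hc'a
  have hcc' : ¬ T₀.Reachable c c' := fun h => hc'a (h.symm.trans hca)
  have hf : s(c, c') ∉ T₀.edgeSet := fun h => hcc' (Adj.reachable h)
  have hreach : ∀ v, (T₀ ⊔ edge c c').Reachable v a := by
    have hcc'' : (T₀ ⊔ edge c c').Adj c' c := Or.inr (by simp [edge_adj, hc.ne.symm])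
    have ha'a : (T₀ ⊔ edge c c').Reachable a' a :=
      ((hc'a'.symm.mono le_sup_left).trans hcc''.reachable).trans (hca.mono le_sup_left)
    intro v
    rcases (hTconn.preconnected v a).deleteEdges_or a' with h | h
    exacts [h.mono le_sup_left, (h.mono le_sup_left).trans ha'a]
  have : Nonempty V := hTconn.nonempty
  have hspan : IsSpanningTree G (T₀ ⊔ edge c c') :=
    ⟨sup_le ((deleteEdges_le _).trans hTG) ((edge_le_iff G).2 (Or.inr hc)),
      ⟨fun v w => (hreach v).trans (hreach w).symm⟩,
      (hTacyc.anti (deleteEdges_le _)).sup_edge_of_not_reachable hcc'⟩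
  have hT₀ : treeWeight T₀ b + b s(a, a') = treeWeight T b := by
    rw [← treeWeight_edge (b := b) ha.ne]
    exact treeWeight_sdiff_add ((edge_le_iff T).2 (Or.inr ha))
  have hswap : treeWeight (T₀ ⊔ edge c c') b = treeWeight T₀ b + b s(c, c') := by
    have hdisj : Disjoint T₀.edgeSet (edge c c').edgeSet := by
      rwa [edgeSet_edge_of_ne hc.ne, Set.disjoint_singleton_right]
    rw [treeWeight_sup_of_disjoint hdisj, treeWeight_edge hc.ne]
  linarith [hmin _ hspan]

lemma exists_le_of_mem_edges {x y : V} {p : T.Walk x y} (hp : p.IsPath) {e : Sym2 V}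
    (he : e ∈ p.edges) (w : G.Walk x y) : ∃ f ∈ w.edges, b e ≤ b f := by
  induction e using Sym2.ind with
  | _ a a' =>
  have ha : T.Adj a a' := p.adj_of_mem_edges he
  have hsep := hT.isAcyclic.not_reachable_deleteEdges_of_mem_edges hp he
  set S := {v | (T.deleteEdges {s(a, a')}).Reachable v a}
  have hcross : ∀ {x y : V} (w : G.Walk x y), x ∈ S → y ∉ S →
      ∃ f ∈ w.edges, b s(a, a') ≤ b f := by
    intro x y w hx hy
    obtain ⟨d, hd, hdS, hdS'⟩ := w.exists_boundary_dart S hx hy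
    exact ⟨d.edge, List.mem_map_of_mem hd, hT.le_of_adj_of_not_reachable ha d.adj hdS hdS'⟩
  by_cases hx : x ∈ S <;> by_cases hy : y ∈ S
  · exact (hsep (hx.trans hy.symm)).elim
  · exact hcross w hx hy
  · simpa using hcross w.reverse hy hx
  · have hx' := ((hT.connected.preconnected x a).deleteEdges_or a').resolve_left hx
    have hy' := ((hT.connected.preconnected y a).deleteEdges_or a').resolve_left hy
    exact (hsep (hx'.trans hy'.symm)).elim

lemma mem_edgeSet_percGraph_of_mem_edges {u : ℝ} {x y : V}
    (hxy : (percGraph G b u).Reachable x y) {p : T.Walk x y} (hp : p.IsPath) {e : Sym2 V}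
    (he : e ∈ p.edges) : e ∈ (percGraph G b u).edgeSet := by
  obtain ⟨w⟩ := hxy
  obtain ⟨f, hf, hef⟩ := hT.exists_le_of_mem_edges hp he (w.mapLe percGraph_le)
  rw [Walk.edges_mapLe_eq_edges] at hf
  exact mem_edgeSet_percGraph.2 ⟨edgeSet_mono hT.le (p.edges_subset_edgeSet he),
    hef.trans (mem_edgeSet_percGraph.1 (w.edges_subset_edgeSet hf)).2⟩

lemma connectedComponentMk_eq_of_mem_support {u : ℝ} {C : (percGraph G b u).ConnectedComponent}
    {x y z : V} (hx : (percGraph G b u).connectedComponentMk x = C)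
    (hy : (percGraph G b u).connectedComponentMk y = C) {p : T.Walk x y} (hp : p.IsPath)
    (hz : z ∈ p.support) : (percGraph G b u).connectedComponentMk z = C := by
  have hxy : (percGraph G b u).Reachable x y := ConnectedComponent.exact (hx.trans hy.symm)
  let q := p.transfer (percGraph G b u) fun e he => hT.mem_edgeSet_percGraph_of_mem_edges hxy hp he
  have hz' : z ∈ q.support := by rwa [Walk.support_transfer]
  rw [← hx]
  exact (ConnectedComponent.sound (q.takeUntil z hz').reachable).symm

lemma isSpanningTreeOn_restrictToComp (u : ℝ) (C : (percGraph G b u).ConnectedComponent) :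
    IsSpanningTreeOn (percGraph G b u) (restrictToComp T (percGraph G b u) C) C := by
  refine ⟨fun v w h => ?_, hT.isAcyclic.anti restrictToComp_le, fun x y h => ⟨h.2.1, h.2.2⟩,
    fun x y hx hy => ?_⟩
  · have hvw := ConnectedComponent.exact (h.2.1.trans h.2.2.symm)
    exact hT.mem_edgeSet_percGraph_of_mem_edges (e := s(v, w)) hvw (Path.singleton h.1).2
      (by simp [Path.singleton])
  · obtain ⟨p, hp⟩ := hT.connected.exists_isPath x y
    refine ⟨p.transfer _ fun e he => ?_⟩
    induction e using Sym2.ind with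
    | _ s t =>
    exact ⟨p.adj_of_mem_edges he,
      hT.connectedComponentMk_eq_of_mem_support hx hy hp (p.fst_mem_support_of_mem_edges he),
      hT.connectedComponentMk_eq_of_mem_support hx hy hp (p.snd_mem_support_of_mem_edges he)⟩

lemma treeWeight_restrictToComp_le {Gu S : SimpleGraph V} (hGu : Gu ≤ G)
    (hb : ∀ e ∈ G.edgeSet, 0 ≤ b e) {C : Gu.ConnectedComponent}
    (hS : IsSpanningTreeOn Gu S C) :
    treeWeight (restrictToComp T Gu C) b ≤ treeWeight S b := by
  set R := restrictToComp T Gu C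
  obtain ⟨hSGu, -, hSC, hSconn⟩ := hS
  have hdisj : Disjoint (T \ R).edgeSet S.edgeSet := by
    refine Set.disjoint_left.2 fun e heT heS => ?_
    induction e using Sym2.ind with
    | _ x y => exact heT.2 ⟨heT.1, hSC x y heS⟩
  have : Nonempty V := hT.connected.nonempty
  have hconn : (T \ R ⊔ S).Connected := by
    refine ⟨fun v w => (hT.connected.preconnected v w).of_forall_adj_reachable
      fun x y hxy => ?_⟩
    by_cases hR : R.Adj x y
    · exact (hSconn x y hR.2.1 hR.2.2).mono le_sup_right
    · exact (show (T \ R ⊔ S).Adj x y from Or.inl ⟨hxy, hR⟩).reachable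
  have hle : T \ R ⊔ S ≤ G := sup_le (sdiff_le.trans hT.le) (hSGu.trans hGu)
  have hw := hT.treeWeight_le_of_connected hle hconn hb
  rw [treeWeight_sup_of_disjoint hdisj,
    ← treeWeight_sdiff_add (restrictToComp_le : R ≤ T)] at hw
  linarith

end IsMinSpanningTree

end

theorem mst_restriction_to_percolation_component_general (G : SimpleGraph V)
    (b : Sym2 V → ℝ)
    (hb_nonneg : ∀ e ∈ G.edgeSet, 0 ≤ b e)
    (T : SimpleGraph V)
    (hT : IsSpanningTree G T ∧ ∀ T', IsSpanningTree G T' → treeWeight T b ≤ treeWeight T' b)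
    (u : ℝ)
    (C : (percGraph G b u).ConnectedComponent) :
    (∀ x y : V, (percGraph G b u).connectedComponentMk x = C →
        (percGraph G b u).connectedComponentMk y = C →
        ∀ p : T.Walk x y, p.IsPath →
          ∀ z ∈ p.support, (percGraph G b u).connectedComponentMk z = C) ∧
    IsSpanningTreeOn (percGraph G b u) (restrictToComp T (percGraph G b u) C) C ∧
    (∀ S : SimpleGraph V, IsSpanningTreeOn (percGraph G b u) S C →
      treeWeight (restrictToComp T (percGraph G b u) C) b ≤ treeWeight S b) := by
  have hT : IsMinSpanningTree G T b := hT
  exact ⟨fun x y hx hy p hp z hz => hT.connectedComponentMk_eq_of_mem_support hx hy hp hz,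
    hT.isSpanningTreeOn_restrictToComp u C,
    fun S hS => hT.treeWeight_restrictToComp_le percGraph_le hb_nonneg hS⟩

/-- Let `T` be the minimum spanning tree of a finite connected graph `G` with
injective nonnegative edge weights `b`, fix `u ≥ 0` and a connected component `C` of the
percolated graph `(V, E^u)`. Then every path in `T` joining two vertices of `C` stays inside
`C`, and the edges of `T` with both endpoints in `C` form exactly the minimum spanning tree of
the component `C` with respect to the restriction of `b`. -/
theorem mst_restriction_to_percolation_component (G : SimpleGraph V) (hG : G.Connected)
    (b : Sym2 V → ℝ)
    (hb_nonneg : ∀ e ∈ G.edgeSet, 0 ≤ b e)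
    (hb_inj : ∀ e ∈ G.edgeSet, ∀ f ∈ G.edgeSet, b e = b f → e = f)
    (T : SimpleGraph V)
    (hT : IsSpanningTree G T ∧ ∀ T', IsSpanningTree G T' → treeWeight T b ≤ treeWeight T' b)
    (u : ℝ) (hu : 0 ≤ u)
    (C : (percGraph G b u).ConnectedComponent) :
    (∀ x y : V, (percGraph G b u).connectedComponentMk x = C →
        (percGraph G b u).connectedComponentMk y = C →
        ∀ p : T.Walk x y, p.IsPath →
          ∀ z ∈ p.support, (percGraph G b u).connectedComponentMk z = C) ∧
    IsSpanningTreeOn (percGraph G b u) (restrictToComp T (percGraph G b u) C) C ∧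
    (∀ S : SimpleGraph V, IsSpanningTreeOn (percGraph G b u) S C →
      treeWeight (restrictToComp T (percGraph G b u) C) b ≤ treeWeight S b) :=
  mst_restriction_to_percolation_component_general G b hb_nonneg T hT u C

end
end

section
/- For every finite simple graph H with at least one vertex, 1 + LP(H) ≤ 8 · (diam(H) + 1) · (maxsurplus(H) + 1). -/
/-! Let `p` be a path starting at `u`, and fix a breadth-first spanning tree of the component
of `u`, rooted at `u`. A path from `a` to `b` using only tree edges first climbs towards the
root and then descends: after a downward step it can never step up again, since the only upward
edge leads back to the vertex it just left. So it has at most `dist(u, a) + dist(u, b) ≤ 2 · diam`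
edges. The tree has `|V(C)| - 1` edges, so at most `maxsurplus` edges of `p` are not tree edges,
and they cut `p` into at most `maxsurplus + 1` tree paths. Hence
`|p| + 1 ≤ (2 · diam + 1) · (maxsurplus + 1)`. -/

open scoped Classical

noncomputable section

variable {V : Type} [Fintype V] [DecidableEq V]

/-- `LP H`: the maximal number of edges of a self-avoiding path in `H`. -/
def longestPath (H : SimpleGraph V) : ℕ :=
  sSup {k : ℕ | ∃ (u v : V) (p : H.Walk u v), p.IsPath ∧ p.length = k}

/-- `diam H`: the maximum, over connected components, of the diameter of the component with
respect to the graph distance (expressed as the largest graph distance between two vertices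
lying in a common component). -/
def graphDiam (H : SimpleGraph V) : ℕ :=
  sSup {k : ℕ | ∃ u v : V, H.Reachable u v ∧ H.dist u v = k}

/-- The number of vertices of the connected component `c` of `H`. -/
def compVertCount (H : SimpleGraph V) (c : H.ConnectedComponent) : ℕ :=
  (Finset.univ.filter fun v : V => H.connectedComponentMk v = c).card

/-- The number of edges of the connected component `c` of `H`. -/
def compEdgeCount (H : SimpleGraph V) (c : H.ConnectedComponent) : ℕ :=
  (Finset.univ.filter fun e : Sym2 V =>
    e ∈ H.edgeSet ∧ ∀ x ∈ e, H.connectedComponentMk x = c).card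

/-- `maxsurplus H`: the maximum over connected components `C` of `H` of
`|E(C)| − |V(C)| + 1` (computed in `ℕ` as `|E(C)| + 1 − |V(C)|`, which agrees with the surplus
since every connected component satisfies `|E(C)| ≥ |V(C)| − 1`). -/
def maxSurplus (H : SimpleGraph V) : ℕ :=
  sSup {s : ℕ | ∃ c : H.ConnectedComponent, s = compEdgeCount H c + 1 - compVertCount H c}

end

namespace SimpleGraph

variable {V : Type*} {G : SimpleGraph V}

section Splitting

variable {P : Sym2 V → Prop} {M : ℕ}

theorem Walk.length_add_length_add_one_le_of_isPath_append
    (hM : ∀ {a b : V} (r : G.Walk a b), r.IsPath → (∀ e ∈ r.edges, P e) → r.length ≤ M)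
    {a b c : V} (r : G.Walk a b) (q : G.Walk b c) (hrq : (r.append q).IsPath)
    (hr : ∀ e ∈ r.edges, P e) :
    r.length + q.length + 1 ≤ (M + 1) * ((q.edges.filter (¬ P ·)).length + 1) := by
  induction q generalizing a with
  | nil =>
    have := hM r (by simpa using hrq) hr
    simp only [length_nil, edges_nil, List.filter_nil, List.length_nil]
    omega
  | @cons b c d h q ih =>
    by_cases hP : P s(b, c)
    · have := ih (r.concat h) (by rwa [concat_append])
        (by simpa [edges_concat, or_imp, forall_and] using ⟨hr, hP⟩)
      rw [length_concat] at this
      rw [edges_cons, List.filter_cons_of_neg (by simpa using hP), length_cons]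
      omega
    · have hr' := hM r hrq.of_append_left hr
      have hq := ih nil (by simpa using hrq.of_append_right.of_cons) (by simp)
      rw [length_nil] at hq
      rw [edges_cons, List.filter_cons_of_pos (by simpa using hP), List.length_cons, length_cons,
        mul_add_one]
      omega

theorem Walk.IsPath.length_add_one_le_mul
    (hM : ∀ {a b : V} (r : G.Walk a b), r.IsPath → (∀ e ∈ r.edges, P e) → r.length ≤ M)
    {a b : V} {q : G.Walk a b} (hq : q.IsPath) :
    q.length + 1 ≤ (M + 1) * ((q.edges.filter (¬ P ·)).length + 1) := by
  simpa using Walk.length_add_length_add_one_le_of_isPath_append hM Walk.nil q (by simpa) (by simp)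

end Splitting

theorem Reachable.exists_adj_dist_add_one_eq {u x : V} (h : G.Reachable u x) (hne : x ≠ u) :
    ∃ y, G.Adj y x ∧ G.dist u y + 1 = G.dist u x := by
  obtain ⟨p, hp⟩ := h.symm.exists_walk_length_eq_dist
  cases p with
  | nil => exact absurd rfl hne
  | @cons _ y _ hxy q =>
    have hq : G.dist u y ≤ q.length := dist_comm (G := G) ▸ dist_le q
    rw [dist_comm, Walk.length_cons] at hp
    refine ⟨y, hxy.symm, ?_⟩
    rcases hxy.symm.diff_dist_adj (u := u) with h | h | h <;> omega

def IsBFSParent (G : SimpleGraph V) (u : V) (par : V → V) : Prop :=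
  ∀ x, G.Reachable u x → x ≠ u → G.Adj (par x) x ∧ G.dist u (par x) + 1 = G.dist u x

def bfsTreeEdges (G : SimpleGraph V) (u : V) (par : V → V) : Set (Sym2 V) :=
  (fun x => s(par x, x)) '' {x | G.Reachable u x ∧ x ≠ u}

theorem exists_isBFSParent (G : SimpleGraph V) (u : V) : ∃ par, G.IsBFSParent u par := by
  choose! par hpar using fun x (hx : G.Reachable u x) (hne : x ≠ u) =>
    hx.exists_adj_dist_add_one_eq hne
  exact ⟨par, hpar⟩

namespace IsBFSParent

variable {u a b : V} {par : V → V}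

theorem injOn (hpar : G.IsBFSParent u par) :
    Set.InjOn (fun x => s(par x, x)) {x | G.Reachable u x ∧ x ≠ u} := by
  rintro a ⟨ha, hau⟩ b ⟨hb, hbu⟩ hab
  have hda := (hpar a ha hau).2
  have hdb := (hpar b hb hbu).2
  rcases Sym2.eq_iff.mp hab with ⟨-, h⟩ | ⟨h₁, h₂⟩
  · exact h
  · rw [h₁] at hda
    rw [← h₂] at hdb
    omega

theorem parent_cases (hpar : G.IsBFSParent u par) (he : s(a, b) ∈ G.bfsTreeEdges u par) :
    (par b = a ∧ G.dist u b = G.dist u a + 1) ∨ (par a = b ∧ G.dist u a = G.dist u b + 1) := by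
  obtain ⟨x, ⟨hx, hxu⟩, hxe⟩ := he
  have := (hpar x hx hxu).2
  rcases Sym2.eq_iff.mp hxe with ⟨rfl, rfl⟩ | ⟨rfl, rfl⟩
  · exact .inl ⟨rfl, by omega⟩
  · exact .inr ⟨rfl, by omega⟩

theorem dist_add_length_eq (hpar : G.IsBFSParent u par) {q : G.Walk a b} (hq : q.IsPath)
    (hT : ∀ e ∈ q.edges, e ∈ G.bfsTreeEdges u par) (ha : par a ∉ q.support) :
    G.dist u a + q.length = G.dist u b := by
  induction q with
  | nil => rfl
  | @cons a c b h q ih =>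
    rw [Walk.cons_isPath_iff] at hq
    simp only [Walk.edges_cons, List.mem_cons, forall_eq_or_imp] at hT
    rcases hpar.parent_cases hT.1 with ⟨hc, hdist⟩ | ⟨hc, -⟩
    · have := ih hq.1 hT.2 (hc ▸ hq.2)
      rw [Walk.length_cons]
      omega
    · exact absurd (by simp [hc]) ha

theorem length_le_dist_add_dist (hpar : G.IsBFSParent u par) {q : G.Walk a b} (hq : q.IsPath)
    (hT : ∀ e ∈ q.edges, e ∈ G.bfsTreeEdges u par) :
    q.length ≤ G.dist u a + G.dist u b := by
  induction q with
  | nil => exact Nat.zero_le _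
  | @cons a c b h q ih =>
    rw [Walk.cons_isPath_iff] at hq
    simp only [Walk.edges_cons, List.mem_cons, forall_eq_or_imp] at hT
    rw [Walk.length_cons]
    rcases hpar.parent_cases hT.1 with ⟨hc, hdist⟩ | ⟨-, hdist⟩
    · have := hpar.dist_add_length_eq hq.1 hT.2 (hc ▸ hq.2)
      omega
    · have := ih hq.1 hT.2
      omega

end IsBFSParent

end SimpleGraph

open SimpleGraph Finset

theorem dist_le_graphDiam {V : Type} [Finite V] (H : SimpleGraph V) (u v : V) :
    H.dist u v ≤ graphDiam H := by
  by_cases huv : H.Reachable u v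
  · refine le_csSup ?_ ⟨u, v, huv, rfl⟩
    exact ((Set.finite_range fun p : V × V => H.dist p.1 p.2).subset
      (by rintro _ ⟨a, b, -, rfl⟩; exact ⟨(a, b), rfl⟩)).bddAbove
  · simp [dist_eq_zero_of_not_reachable huv]

theorem compEdgeCount_add_one_sub_compVertCount_le_maxSurplus {V : Type} [Fintype V]
    [DecidableEq V] (H : SimpleGraph V) (c : H.ConnectedComponent) :
    compEdgeCount H c + 1 - compVertCount H c ≤ maxSurplus H :=
  le_csSup ((Set.finite_range fun c => compEdgeCount H c + 1 - compVertCount H c).subset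
    (by rintro _ ⟨c, rfl⟩; exact ⟨c, rfl⟩)).bddAbove ⟨c, rfl⟩

theorem SimpleGraph.IsBFSParent.card_le_maxSurplus {V : Type} [Fintype V] [DecidableEq V]
    {H : SimpleGraph V} {u : V} {par : V → V} (hpar : H.IsBFSParent u par) {S : Finset (Sym2 V)}
    (hS : ∀ e ∈ S, e ∈ H.edgeSet ∧ e ∉ H.bfsTreeEdges u par ∧ ∀ x ∈ e, H.Reachable u x) :
    #S ≤ maxSurplus H := by
  set c := H.connectedComponentMk u
  have hc (x : V) : H.connectedComponentMk x = c ↔ H.Reachable u x :=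
    ConnectedComponent.eq.trans ⟨.symm, .symm⟩
  set R := ({x | H.connectedComponentMk x = c} : Finset V).erase u
  have hR : ∀ x ∈ R, H.Reachable u x ∧ x ≠ u := by simp [R, hc, and_comm]
  set T := R.image fun x => s(par x, x)
  have hT : #T + 1 = compVertCount H c := by
    rw [card_image_of_injOn (hpar.injOn.mono hR), card_erase_add_one (by simp [c])]
    rfl
  have hdisj : Disjoint S T := by
    rw [Finset.disjoint_left]
    intro e heS heT
    refine (hS e heS).2.1 ?_
    obtain ⟨x, hx, rfl⟩ := mem_image.mp heT
    exact ⟨x, hR x hx, rfl⟩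
  have hST : #(S ∪ T) ≤ compEdgeCount H c := by
    refine card_le_card fun e he => ?_
    simp only [mem_filter, mem_univ, true_and, hc]
    rcases mem_union.mp he with heS | heT
    · exact ⟨(hS e heS).1, (hS e heS).2.2⟩
    · obtain ⟨x, hx, rfl⟩ := mem_image.mp heT
      obtain ⟨hadj, -⟩ := hpar x (hR x hx).1 (hR x hx).2
      refine ⟨hadj, fun y hy => ?_⟩
      rcases Sym2.mem_iff.mp hy with rfl | rfl
      exacts [(hR _ hx).1.trans hadj.symm.reachable, (hR _ hx).1]
  rw [card_union_of_disjoint hdisj] at hST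
  have := compEdgeCount_add_one_sub_compVertCount_le_maxSurplus H c
  omega

theorem SimpleGraph.Walk.IsPath.length_add_one_le_graphDiam_mul_maxSurplus {V : Type} [Fintype V]
    [DecidableEq V] {H : SimpleGraph V} {u v : V} {p : H.Walk u v} (hp : p.IsPath) :
    p.length + 1 ≤ (2 * graphDiam H + 1) * (maxSurplus H + 1) := by
  obtain ⟨par, hpar⟩ := H.exists_isBFSParent u
  have hnontree : (p.edges.filter (· ∉ H.bfsTreeEdges u par)).length ≤ maxSurplus H := by
    rw [← List.toFinset_card_of_nodup (hp.isTrail.edges_nodup.filter _)]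
    refine hpar.card_le_maxSurplus fun e he => ?_
    simp only [List.mem_toFinset, List.mem_filter, decide_eq_true_eq] at he
    exact ⟨p.edges_subset_edgeSet he.1, he.2,
      fun x hx => ⟨p.takeUntil x (p.mem_support_of_mem_edges he.1 hx)⟩⟩
  calc p.length + 1
      ≤ (2 * graphDiam H + 1) * ((p.edges.filter (· ∉ H.bfsTreeEdges u par)).length + 1) :=
        hp.length_add_one_le_mul fun {a b} r hr hT =>
          (hpar.length_le_dist_add_dist hr hT).trans
            (by linarith [dist_le_graphDiam H u a, dist_le_graphDiam H u b])
    _ ≤ (2 * graphDiam H + 1) * (maxSurplus H + 1) := by gcongr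

variable {V : Type} [Fintype V] [DecidableEq V]

theorem one_add_longestPath_le_general (H : SimpleGraph V) :
    1 + longestPath H ≤ 8 * (graphDiam H + 1) * (maxSurplus H + 1) := by
  have hpos : 0 < (2 * graphDiam H + 1) * (maxSurplus H + 1) := by positivity
  have hLP : longestPath H ≤ (2 * graphDiam H + 1) * (maxSurplus H + 1) - 1 :=
    csSup_le' <| by
      rintro _ ⟨u, v, p, hp, rfl⟩
      have := hp.length_add_one_le_graphDiam_mul_maxSurplus
      omega
  calc 1 + longestPath H ≤ (2 * graphDiam H + 1) * (maxSurplus H + 1) := by omega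
    _ ≤ 8 * (graphDiam H + 1) * (maxSurplus H + 1) := by gcongr; omega

/-- For every finite simple graph `H` with at least one vertex,
`1 + LP(H) ≤ 8 · (diam(H) + 1) · (maxsurplus(H) + 1)`. -/
theorem one_add_longestPath_le (H : SimpleGraph V) [Nonempty V] :
    1 + longestPath H ≤ 8 * (graphDiam H + 1) * (maxSurplus H + 1) :=
  one_add_longestPath_le_general H
end

section
/- Let k, m₀ be positive integers and x₀, x₁, …, x_k ∈ (0,1) with x₀ ≤ min{x_j : 1 ≤ j ≤ k}. Let Z_i^{(0)}, 1 ≤ i ≤ m₀, and Z^{(1)}, …, Z^{(k)} be independent random variables with Z_i^{(0)} uniformly distributed on [x₀, 1] for each i and Z^{(j)} uniformly distributed on [x_j, 1] for each j. Then P( min_{1 ≤ i ≤ m₀} Z_i^{(0)} < min_{1 ≤ j ≤ k} Z^{(j)} ) ≥ m₀/(m₀ + k). -/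
/-!
Conditionally on the first block, the event says that every `Z^{(j)}` exceeds the block minimum
`w`, which has probability `∏ⱼ P(Z^{(j)} > w)`; each factor can only decrease when `x_j` is
lowered to `x₀`. This reduces the claim to `m₀ + k` i.i.d. atomless variables. There ties are
null, so by exchangeability each variable is the strict minimum with probability `1/(m₀ + k)`,
and the event contains the `m₀` disjoint events that the strict minimum lies in the first block.
-/

open MeasureTheory ProbabilityTheory Set

open scoped ENNReal

instance ProbabilityTheory.cond.instNullSingletonClass {α : Type*} [MeasurableSpace α]
    (μ : Measure α) [NullSingletonClass μ] (s : Set α) : NullSingletonClass μ[|s] :=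
  ⟨fun x => cond_absolutelyContinuous (measure_singleton x)⟩

lemma cond_volume_Icc_Ioi_mono {a b c : ℝ} (hab : a ≤ b) (hbc : b < c) (t : ℝ) :
    cond volume (Icc a c) (Ioi t) ≤ cond volume (Icc b c) (Ioi t) := by
  have : IsProbabilityMeasure (cond volume (Icc a c)) :=
    cond_isProbabilityMeasure_of_finite (by simp [hab.trans_lt hbc]) (by simp)
  rcases lt_or_ge t b with htb | hbt
  · calc cond volume (Icc a c) (Ioi t) ≤ 1 := prob_le_one
      _ = cond volume (Icc b c) (Icc b c) := (cond_apply_self (by simp [hbc]) (by simp)).symm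
      _ ≤ cond volume (Icc b c) (Ioi t) := measure_mono fun y hy => htb.trans_le hy.1
  · have hsec : Icc a c ∩ Ioi t = Icc b c ∩ Ioi t := by
      ext y
      simp only [mem_inter_iff, mem_Icc, mem_Ioi]
      constructor <;> rintro ⟨⟨h1, h2⟩, h3⟩ <;> exact ⟨⟨by linarith, h2⟩, h3⟩
    rw [cond_apply measurableSet_Icc, cond_apply measurableSet_Icc, hsec]
    gcongr

section StrictMin

variable {ι : Type*}

def strictMinAt (c : ι) : Set (ι → ℝ) := {u | ∀ d ≠ c, u c < u d}

lemma measurableSet_strictMinAt [Countable ι] (c : ι) : MeasurableSet (strictMinAt c) := by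
  have : strictMinAt c = ⋂ d, ⋂ (_ : d ≠ c), {u : ι → ℝ | u c < u d} := by
    ext u; simp [strictMinAt]
  rw [this]
  exact .iInter fun d => .iInter fun _ =>
    measurableSet_lt (measurable_pi_apply c) (measurable_pi_apply d)

lemma pairwise_disjoint_strictMinAt :
    Pairwise (Function.onFun Disjoint (strictMinAt : ι → Set (ι → ℝ))) :=
  fun c d hcd => disjoint_left.mpr fun _ hc hd => lt_asymm (hc d hcd.symm) (hd c hcd)

lemma preimage_comp_strictMinAt (σ : Equiv.Perm ι) (c : ι) :
    (fun u : ι → ℝ => u ∘ σ) ⁻¹' strictMinAt c = strictMinAt (σ c) := by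
  ext u
  simp only [strictMinAt, mem_preimage, mem_ofPred_eq, Function.comp_apply]
  exact σ.forall_congr fun d => by simp [σ.injective.eq_iff]

lemma measurePreserving_comp_perm {α : Type*} [MeasurableSpace α] [Fintype ι] (μ : Measure α)
    [SigmaFinite μ] (σ : Equiv.Perm ι) :
    MeasurePreserving (fun u : ι → α => u ∘ σ) (Measure.pi fun _ => μ)
      (Measure.pi fun _ => μ) := by
  convert measurePreserving_piCongrLeft (fun _ : ι => μ) σ.symm using 1
  ext u i
  simp [MeasurableEquiv.piCongrLeft, Equiv.piCongrLeft]

lemma prod_diagonal_eq_zero {α : Type*} [MeasurableSpace α] [MeasurableEq α]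
    (μ ν : Measure α) [SFinite ν] [NullSingletonClass ν] : μ.prod ν (diagonal α) = 0 := by
  rw [Measure.prod_apply measurableSet_diagonal]
  simp [preimage, mem_diagonal_iff]

lemma pi_eval_eq_eval_eq_zero {α : Type*} [MeasurableSpace α] [MeasurableEq α] [Fintype ι]
    (ν : ι → Measure α) [∀ i, IsProbabilityMeasure (ν i)] {c d : ι} [NullSingletonClass (ν d)]
    (hcd : c ≠ d) : Measure.pi ν {u | u c = u d} = 0 := by
  have hindep : IndepFun (fun u : ι → α => u c) (fun u => u d) (Measure.pi ν) :=
    (iIndepFun_pi (X := fun _ => id) fun _ => aemeasurable_id).indepFun hcd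
  have hpair : (Measure.pi ν).map (fun u => (u c, u d)) = (ν c).prod (ν d) := by
    rw [(indepFun_iff_map_prod_eq_prod_map_map (measurable_pi_apply c).aemeasurable
      (measurable_pi_apply d).aemeasurable).1 hindep, (measurePreserving_eval ν c).map_eq,
      (measurePreserving_eval ν d).map_eq]
  change Measure.pi ν ((fun u => (u c, u d)) ⁻¹' diagonal α) = 0
  rw [← Measure.map_apply ((measurable_pi_apply c).prodMk (measurable_pi_apply d))
    measurableSet_diagonal, hpair, prod_diagonal_eq_zero]

lemma compl_iUnion_strictMinAt_subset [Finite ι] [Nonempty ι] :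
    (⋃ c, strictMinAt c)ᶜ ⊆ ⋃ c, ⋃ d, ⋃ (_ : c ≠ d), {u : ι → ℝ | u c = u d} := by
  intro u hu
  obtain ⟨c, hc⟩ := Finite.exists_min u
  simp only [mem_compl_iff, mem_iUnion, strictMinAt, mem_ofPred_eq, not_exists, not_forall,
    not_lt] at hu ⊢
  obtain ⟨d, hdc, hdu⟩ := hu c
  exact ⟨c, d, Ne.symm hdc, le_antisymm (hc d) hdu⟩

lemma sum_pi_strictMinAt_eq_one [Fintype ι] [Nonempty ι] (μ : Measure ℝ)
    [IsProbabilityMeasure μ] [NullSingletonClass μ] :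
    ∑ c, Measure.pi (fun _ : ι => μ) (strictMinAt c) = 1 := by
  have hnull : Measure.pi (fun _ : ι => μ) (⋃ c, strictMinAt c)ᶜ = 0 :=
    measure_mono_null compl_iUnion_strictMinAt_subset <| measure_iUnion_null fun c =>
      measure_iUnion_null fun d => measure_iUnion_null fun hcd => pi_eval_eq_eval_eq_zero _ hcd
  calc ∑ c, Measure.pi (fun _ : ι => μ) (strictMinAt c)
      = Measure.pi (fun _ : ι => μ) (⋃ c, strictMinAt c) := by
        rw [measure_iUnion pairwise_disjoint_strictMinAt measurableSet_strictMinAt, tsum_fintype]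
    _ = 1 := (prob_compl_eq_zero_iff (.iUnion measurableSet_strictMinAt)).1 hnull

lemma pi_strictMinAt_eq_inv_card [Fintype ι] [Nonempty ι] (μ : Measure ℝ)
    [IsProbabilityMeasure μ] [NullSingletonClass μ] (c : ι) :
    Measure.pi (fun _ : ι => μ) (strictMinAt c) = (Fintype.card ι : ℝ≥0∞)⁻¹ := by
  classical
  have hconst : ∀ d, Measure.pi (fun _ : ι => μ) (strictMinAt d)
      = Measure.pi (fun _ : ι => μ) (strictMinAt c) := fun d => by
    rw [← Equiv.swap_apply_left c d, ← preimage_comp_strictMinAt]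
    exact (measurePreserving_comp_perm μ _).measure_preimage
      (measurableSet_strictMinAt c).nullMeasurableSet
  have := sum_pi_strictMinAt_eq_one (ι := ι) μ
  simp only [hconst, Finset.sum_const, Finset.card_univ, nsmul_eq_mul] at this
  exact ENNReal.eq_inv_of_mul_eq_one_left (by rwa [mul_comm])

end StrictMin

lemma lt_ciInf_iff_of_finite {α κ : Type*} [ConditionallyCompleteLinearOrder α] [Finite κ]
    [Nonempty κ] {a : α} {f : κ → α} : a < ⨅ j, f j ↔ ∀ j, a < f j := by
  refine ⟨fun h j => h.trans_le (ciInf_le (Finite.bddBelow_range f) j), fun h => ?_⟩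
  obtain ⟨j, hj⟩ := exists_eq_ciInf_of_finite (f := f)
  exact hj ▸ h j

section MinComparison

variable (ι κ : Type*)

def minInlLtMinInr : Set (ι ⊕ κ → ℝ) := {u | ⨅ i, u (.inl i) < ⨅ j, u (.inr j)}

variable {ι κ}

lemma measurableSet_minInlLtMinInr [Countable ι] [Countable κ] :
    MeasurableSet (minInlLtMinInr ι κ) :=
  measurableSet_lt (.iInf fun _ => measurable_pi_apply _) (.iInf fun _ => measurable_pi_apply _)

lemma iUnion_strictMinAt_inl_subset [Finite ι] [Finite κ] [Nonempty κ] :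
    ⋃ i, strictMinAt (.inl i) ⊆ minInlLtMinInr ι κ := by
  simp only [iUnion_subset_iff]
  intro i u hu
  exact lt_ciInf_iff_of_finite.2 fun j =>
    (ciInf_le (Finite.bddBelow_range fun i => u (.inl i)) i).trans_lt (hu _ Sum.inr_ne_inl)

lemma card_div_card_le_pi_minInlLtMinInr [Fintype ι] [Fintype κ] [Nonempty κ]
    (μ : Measure ℝ) [IsProbabilityMeasure μ] [NullSingletonClass μ] :
    (Fintype.card ι : ℝ≥0∞) / Fintype.card (ι ⊕ κ) ≤
      Measure.pi (fun _ => μ) (minInlLtMinInr ι κ) :=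
  calc (Fintype.card ι : ℝ≥0∞) / Fintype.card (ι ⊕ κ)
      = ∑ i : ι, Measure.pi (fun _ => μ) (strictMinAt (Sum.inl i : ι ⊕ κ)) := by
        simp [pi_strictMinAt_eq_inv_card, div_eq_mul_inv]
    _ = Measure.pi (fun _ => μ) (⋃ i, strictMinAt (Sum.inl i : ι ⊕ κ)) := by
        rw [measure_iUnion (pairwise_disjoint_strictMinAt.comp_of_injective Sum.inl_injective)
          fun i => measurableSet_strictMinAt _, tsum_fintype]
    _ ≤ _ := measure_mono iUnion_strictMinAt_inl_subset

lemma pi_minInlLtMinInr_eq_lintegral [Fintype ι] [Fintype κ] [Nonempty κ]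
    (ν : ι ⊕ κ → Measure ℝ) [∀ c, SigmaFinite (ν c)] :
    Measure.pi ν (minInlLtMinInr ι κ) =
      ∫⁻ w, ∏ j, ν (.inr j) (Ioi (⨅ i, w i)) ∂Measure.pi fun i => ν (.inl i) := by
  have hsplit := measurePreserving_sumPiEquivProdPi_symm ν
  have hpre : (MeasurableEquiv.sumPiEquivProdPi fun _ => ℝ).symm ⁻¹' minInlLtMinInr ι κ
      = {p : (ι → ℝ) × (κ → ℝ) | ⨅ i, p.1 i < ⨅ j, p.2 j} := rfl
  have hmeas : MeasurableSet {p : (ι → ℝ) × (κ → ℝ) | ⨅ i, p.1 i < ⨅ j, p.2 j} :=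
    measurableSet_lt (.iInf fun i => (measurable_pi_apply i).comp measurable_fst)
      (.iInf fun j => (measurable_pi_apply j).comp measurable_snd)
  rw [← hsplit.measure_preimage measurableSet_minInlLtMinInr.nullMeasurableSet, hpre,
    Measure.prod_apply hmeas]
  congr with w
  have hsec : Prod.mk w ⁻¹' {p : (ι → ℝ) × (κ → ℝ) | ⨅ i, p.1 i < ⨅ j, p.2 j}
      = univ.pi fun _ => Ioi (⨅ i, w i) := by
    ext v
    simp [lt_ciInf_iff_of_finite]
  rw [hsec, Measure.pi_pi]

lemma pi_minInlLtMinInr_mono [Fintype ι] [Fintype κ] [Nonempty κ]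
    {ν ν' : ι ⊕ κ → Measure ℝ} [∀ c, SigmaFinite (ν c)] [∀ c, SigmaFinite (ν' c)]
    (hinl : ∀ i, ν (.inl i) = ν' (.inl i))
    (hinr : ∀ j t, ν (.inr j) (Ioi t) ≤ ν' (.inr j) (Ioi t)) :
    Measure.pi ν (minInlLtMinInr ι κ) ≤ Measure.pi ν' (minInlLtMinInr ι κ) := by
  rw [pi_minInlLtMinInr_eq_lintegral, pi_minInlLtMinInr_eq_lintegral, funext hinl]
  exact lintegral_mono fun w => Finset.prod_le_prod' fun j _ => hinr j _

end MinComparison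

theorem min_uniform_comparison_general
    {Ω : Type} [MeasurableSpace Ω] (P : Measure Ω) [IsProbabilityMeasure P]
    (m₀ k : ℕ) (hk : 0 < k)
    (x₀ : ℝ) (x : Fin k → ℝ)
    (hx₀ : x₀ ∈ Set.Ioo (0 : ℝ) 1) (hx : ∀ j, x j ∈ Set.Ioo (0 : ℝ) 1)
    (hx₀le : ∀ j, x₀ ≤ x j)
    (Z₀ : Fin m₀ → Ω → ℝ) (Z : Fin k → Ω → ℝ)
    (hZ₀ : ∀ i, pdf.IsUniform (Z₀ i) (Set.Icc x₀ 1) P)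
    (hZ : ∀ j, pdf.IsUniform (Z j) (Set.Icc (x j) 1) P)
    (hindep : iIndepFun (Sum.elim Z₀ Z) P) :
    ENNReal.ofReal ((m₀ : ℝ) / ((m₀ : ℝ) + (k : ℝ))) ≤
      P {ω | (⨅ i : Fin m₀, Z₀ i ω) < ⨅ j : Fin k, Z j ω} := by
  have : Nonempty (Fin k) := Fin.pos_iff_nonempty.mp hk
  have hvol {a : ℝ} (ha : a < 1) : volume (Icc a 1) ≠ 0 := by simp [ha]
  have hZm : ∀ c, AEMeasurable (Sum.elim Z₀ Z c) P := by
    rintro (i | j)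
    · exact (hZ₀ i).aemeasurable (hvol hx₀.2) (by simp)
    · exact (hZ j).aemeasurable (hvol (hx j).2) (by simp)
  have : IsProbabilityMeasure (cond volume (Icc x₀ 1)) :=
    cond_isProbabilityMeasure_of_finite (hvol hx₀.2) (by simp)
  calc ENNReal.ofReal ((m₀ : ℝ) / ((m₀ : ℝ) + (k : ℝ)))
      = (Fintype.card (Fin m₀) : ℝ≥0∞) / Fintype.card (Fin m₀ ⊕ Fin k) := by
        rw [ENNReal.ofReal_div_of_pos (by positivity)]
        simp [← Nat.cast_add, ENNReal.ofReal_natCast]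
    _ ≤ Measure.pi (fun _ => cond volume (Icc x₀ 1)) (minInlLtMinInr (Fin m₀) (Fin k)) :=
        card_div_card_le_pi_minInlLtMinInr _
    _ ≤ Measure.pi (fun c => P.map (Sum.elim Z₀ Z c)) (minInlLtMinInr (Fin m₀) (Fin k)) := by
        refine pi_minInlLtMinInr_mono (fun i => (hZ₀ i).symm) fun j t => ?_
        rw [Sum.elim_inr, hZ j]
        exact cond_volume_Icc_Ioi_mono (hx₀le j) (hx j).2 t
    _ = P {ω | (⨅ i : Fin m₀, Z₀ i ω) < ⨅ j : Fin k, Z j ω} := by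
        rw [← hindep.map_fun_eq_pi_map hZm, Measure.map_apply_of_aemeasurable
          (aemeasurable_pi_lambda _ hZm) measurableSet_minInlLtMinInr]
        rfl

/-- Let `Z₀ᵢ ~ Uniform[x₀, 1]` (`1 ≤ i ≤ m₀`) and `Zʲ ~ Uniform[x_j, 1]`
(`1 ≤ j ≤ k`) be independent, where `x₀, x₁, …, x_k ∈ (0,1)` and `x₀ ≤ min_j x_j`. Then
`P(min_i Z₀ᵢ < min_j Zʲ) ≥ m₀/(m₀ + k)`. -/
theorem min_uniform_comparison
    {Ω : Type} [MeasurableSpace Ω] (P : Measure Ω) [IsProbabilityMeasure P]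
    (m₀ k : ℕ) (hm₀ : 0 < m₀) (hk : 0 < k)
    (x₀ : ℝ) (x : Fin k → ℝ)
    (hx₀ : x₀ ∈ Set.Ioo (0 : ℝ) 1) (hx : ∀ j, x j ∈ Set.Ioo (0 : ℝ) 1)
    (hx₀le : ∀ j, x₀ ≤ x j)
    (Z₀ : Fin m₀ → Ω → ℝ) (Z : Fin k → Ω → ℝ)
    (hZ₀ : ∀ i, pdf.IsUniform (Z₀ i) (Set.Icc x₀ 1) P)
    (hZ : ∀ j, pdf.IsUniform (Z j) (Set.Icc (x j) 1) P)
    (hindep : iIndepFun (Sum.elim Z₀ Z) P) :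
    ENNReal.ofReal ((m₀ : ℝ) / ((m₀ : ℝ) + (k : ℝ))) ≤
      P {ω | (⨅ i : Fin m₀, Z₀ i ω) < ⨅ j : Fin k, Z j ω} :=
  min_uniform_comparison_general P m₀ k hk x₀ x hx₀ hx hx₀le Z₀ Z hZ₀ hZ hindep
end

section
/- Let k, m₀ be positive integers and x₀, x₁, …, x_k ∈ (0,1) with x₀ ≤ min{x_j : 1 ≤ j ≤ k}, and let k̄, m̄₀ be positive integers and x̄₀, x̄₁, …, x̄_{k̄} ∈ (0,1) with x̄₀ ≤ min{x̄_l : 1 ≤ l ≤ k̄}. Let Z_i^{(0)} ~ Uniform[x₀,1] (1 ≤ i ≤ m₀), Z^{(j)} ~ Uniform[x_j,1] (1 ≤ j ≤ k), Z̄_i^{(0)} ~ Uniform[x̄₀,1] (1 ≤ i ≤ m̄₀), and Z̄^{(l)} ~ Uniform[x̄_l,1] (1 ≤ l ≤ k̄) all be mutually independent. Then P( min_{1 ≤ i ≤ m₀} Z_i^{(0)} ∧ min_{1 ≤ i ≤ m̄₀} Z̄_i^{(0)} < min_{1 ≤ j ≤ k} Z^{(j)} ∧ min_{1 ≤ l ≤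 k̄} Z̄^{(l)} ) ≥ min( m₀/(m₀ + k), m̄₀/(m̄₀ + k̄) ). -/
/-!
Let `U` be the minimum of the variables `Z₀ᵢ, Z̄₀ᵢ` and `V` the minimum of the `Zʲ, Z̄ˡ`: they are
independent, and the law `ν` of `V` has no atoms. Since `x₀ ≤ x_j`, the survival function of
Uniform[x₀,1] is dominated by that of Uniform[x_j,1]; comparing `m₀` factors with `k` factors gives
`P(U ≥ c) ≤ P(V ≥ c)^β` for all `c`, where `β = min(m₀/k, m̄₀/k̄)`. By Fubini,
`P(V ≤ U) = ∫ P(U ≥ c) dν(c) ≤ ∫ ν[c,∞)^β dν(c)`. As `ν` has no atoms, `ν[V,∞)` is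
stochastically dominated by Uniform[0,1]: `ν{c | ν[c,∞) > s} ≤ 1 - s`. Hence the last integral
is at most `∫₀¹ u^β du = 1/(1+β)`, and `P(U < V) ≥ β/(1+β) = min(m₀/(m₀+k), m̄₀/(m̄₀+k̄))`.
-/

open MeasureTheory ProbabilityTheory Set Filter
open scoped ENNReal

theorem min_div_add_eq {a b c d : ℝ} (ha : 0 ≤ a) (hb : 0 < b) (hc : 0 ≤ c) (hd : 0 < d) :
    min (a / (a + b)) (c / (c + d)) = min (a / b) (c / d) / (1 + min (a / b) (c / d)) := by
  have hrewrite : ∀ {x y : ℝ}, 0 ≤ x → 0 < y → x / (x + y) = x / y / (1 + x / y) :=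
    fun hx hy => by field_simp; ring
  have hmono : ∀ {s t : ℝ}, 0 ≤ s → s ≤ t → s / (1 + s) ≤ t / (1 + t) := fun hs _ => by
    rw [div_le_div_iff₀ (by linarith) (by linarith)]; linarith
  rw [hrewrite ha hb, hrewrite hc hd]
  rcases le_total (a / b) (c / d) with h | h
  · rw [min_eq_left h, min_eq_left (hmono (by positivity) h)]
  · rw [min_eq_right h, min_eq_right (hmono (by positivity) h)]

theorem ENNReal.pow_le_rpow_of_pow_le {p q : ℝ≥0∞} {m k : ℕ} {β : ℝ} (hk : 0 < k)
    (hq : q ≤ 1) (hpq : p ^ k ≤ q) (hβ : β ≤ m / k) : p ^ m ≤ q ^ β :=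
  calc p ^ m = (p ^ k) ^ ((m : ℝ) / k) := by
        rw [← ENNReal.rpow_natCast p k, ← ENNReal.rpow_mul, mul_div_cancel₀ _ (by positivity),
          ENNReal.rpow_natCast]
    _ ≤ q ^ ((m : ℝ) / k) := ENNReal.rpow_le_rpow hpq (by positivity)
    _ ≤ q ^ β := ENNReal.rpow_le_rpow_of_exponent_ge hq hβ

theorem ciInf_sum {ι κ α : Type*} [ConditionallyCompleteLinearOrder α] [Finite ι] [Finite κ]
    [Nonempty ι] [Nonempty κ] (f : ι ⊕ κ → α) :
    ⨅ i, f i = min (⨅ i, f (.inl i)) (⨅ j, f (.inr j)) :=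
  le_antisymm
    (le_min (le_ciInf fun i => ciInf_le (Finite.bddBelow_range f) (.inl i))
      (le_ciInf fun j => ciInf_le (Finite.bddBelow_range f) (.inr j)))
    (le_ciInf <| Sum.forall.2
      ⟨fun i => (min_le_left _ _).trans (ciInf_le (Finite.bddBelow_range _) i),
        fun j => (min_le_right _ _).trans (ciInf_le (Finite.bddBelow_range _) j)⟩)

/-- `ENNReal.ofReal ((b - max a c) / (b - a))` is `P(X ≥ c)` for `X` uniform on `[a, b]`. -/
theorem ofReal_sub_max_div_sub_le {a a' b : ℝ} (haa' : a ≤ a') (ha'b : a' < b) (c : ℝ) :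
    ENNReal.ofReal ((b - max a c) / (b - a)) ≤
      ENNReal.ofReal ((b - max a' c) / (b - a')) := by
  rcases lt_or_ge b c with hbc | hcb
  · rw [ENNReal.ofReal_eq_zero.2 (div_nonpos_of_nonpos_of_nonneg
      (by linarith [le_max_right a c]) (by linarith))]
    exact zero_le
  refine ENNReal.ofReal_le_ofReal ((div_le_div_iff₀ (by linarith) (by linarith)).2 ?_)
  rcases le_total c a with hca | hac
  · rw [max_eq_left hca, max_eq_left (hca.trans haa')]; linarith
  rcases le_total c a' with hca' | hac'
  · rw [max_eq_right hac, max_eq_left hca']; nlinarith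
  · rw [max_eq_right hac, max_eq_right hac']; nlinarith

theorem measure_lt_measure_Ici_le (ν : Measure ℝ) [IsProbabilityMeasure ν]
    [NullSingletonClass ν] (s : ℝ≥0∞) :
    ν {c | s < ν (Ici c)} ≤ 1 - s := by
  set S := {c | s < ν (Ici c)}
  rcases eq_or_ne s 0 with rfl | hs
  · simpa using prob_le_one
  rcases S.eq_empty_or_nonempty with hS | hS
  · simp [hS]
  obtain ⟨c₀, hc₀⟩ : ∃ c₀, ν (Ici c₀) < s := by
    have hempty : ⋂ c : ℝ, Ici c = ∅ :=
      iInter_eq_empty_iff.2 fun x => ⟨x + 1, by simp⟩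
    have h := antitone_Ici.measure_iInter (μ := ν)
      (fun _ => measurableSet_Ici.nullMeasurableSet) ⟨0, measure_ne_top _ _⟩
    rw [hempty, measure_empty] at h
    exact iInf_lt_iff.1 (h ▸ pos_iff_ne_zero.2 hs)
  have hbdd : BddAbove S := ⟨c₀, fun c hc => le_of_not_gt fun hlt =>
    (hc.trans_le (measure_mono (Ici_subset_Ici.2 hlt.le))).not_gt hc₀⟩
  obtain ⟨u, hu_mono, hu_lt, hu_lim⟩ := exists_seq_strictMono_tendsto (sSup S)
  calc ν S ≤ ν (Iic (sSup S)) := measure_mono fun c hc => le_csSup hbdd hc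
    _ = ν (Iio (sSup S)) := measure_congr Iio_ae_eq_Iic.symm
    _ = ⨆ n, ν (Iic (u n)) := by
      rw [← iUnion_Iic_eq_Iio_of_lt_of_tendsto hu_lt hu_lim,
        Monotone.measure_iUnion fun m n hmn => Iic_subset_Iic.2 (hu_mono.monotone hmn)]
    _ ≤ 1 - s := iSup_le fun n => by
      obtain ⟨a, haS, hua⟩ := exists_lt_of_lt_csSup hS (hu_lt n)
      rw [← compl_Ioi, prob_compl_eq_one_sub measurableSet_Ioi]
      exact tsub_le_tsub_left (haS.le.trans (measure_mono (Ici_subset_Ioi.2 hua))) 1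

theorem setLIntegral_Ioi_ofReal_one_sub_rpow_inv {β : ℝ} (hβ : 0 < β) :
    ∫⁻ t in Ioi 0, ENNReal.ofReal (1 - t ^ β⁻¹) = ENNReal.ofReal (1 / (1 + β)) := by
  have hrpow : IntervalIntegrable (fun t : ℝ => t ^ β⁻¹) volume 0 1 :=
    intervalIntegral.intervalIntegrable_rpow (Or.inl (by positivity))
  have hintegral : ∫ t in (0 : ℝ)..1, (1 - t ^ β⁻¹) = 1 / (1 + β) := by
    rw [intervalIntegral.integral_sub intervalIntegrable_const hrpow,
      integral_rpow (Or.inl (by linarith [inv_pos.2 hβ])), Real.one_rpow,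
      Real.zero_rpow (by positivity)]
    field_simp
    simp
  have hzero : ∫⁻ t in Ioi 1, ENNReal.ofReal (1 - t ^ β⁻¹) = 0 := by
    rw [setLIntegral_congr_fun measurableSet_Ioi (g := fun _ => 0) fun t ht => ?_, lintegral_zero]
    exact ENNReal.ofReal_eq_zero.2 (sub_nonpos.2 (Real.one_le_rpow ht.le (by positivity)))
  have hnonneg : 0 ≤ᵐ[volume.restrict (Ioc (0 : ℝ) 1)] fun t : ℝ => 1 - t ^ β⁻¹ :=
    (ae_restrict_iff' measurableSet_Ioc).2 <| ae_of_all _ fun t ht =>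
      sub_nonneg.2 (Real.rpow_le_one ht.1.le ht.2 (by positivity))
  rw [← Ioc_union_Ioi_eq_Ioi zero_le_one,
    lintegral_union measurableSet_Ioi (Ioc_disjoint_Ioi le_rfl), hzero, add_zero,
    ← ofReal_integral_eq_lintegral_ofReal ((intervalIntegrable_iff_integrableOn_Ioc_of_le
      zero_le_one).1 (intervalIntegrable_const.sub hrpow)) hnonneg,
    ← intervalIntegral.integral_of_le zero_le_one, hintegral]

theorem lintegral_measure_Ici_rpow_le (ν : Measure ℝ) [IsProbabilityMeasure ν]
    [NullSingletonClass ν] {β : ℝ} (hβ : 0 < β) :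
    ∫⁻ c, ν (Ici c) ^ β ∂ν ≤ ENNReal.ofReal (1 / (1 + β)) := by
  have hmeas : Measurable fun c : ℝ => ν.real (Ici c) ^ β :=
    (Antitone.measurable fun a b hab => measureReal_mono (Ici_subset_Ici.2 hab)).pow_const β
  calc ∫⁻ c, ν (Ici c) ^ β ∂ν = ∫⁻ c, ENNReal.ofReal (ν.real (Ici c) ^ β) ∂ν := by
        congr with c
        rw [← ENNReal.ofReal_rpow_of_nonneg measureReal_nonneg hβ.le, ofReal_measureReal]
    _ = ∫⁻ t in Ioi 0, ν {c | t < ν.real (Ici c) ^ β} :=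
        lintegral_eq_lintegral_meas_lt ν (ae_of_all _ fun c => by positivity) hmeas.aemeasurable
    _ ≤ ∫⁻ t in Ioi 0, ENNReal.ofReal (1 - t ^ β⁻¹) := by
        refine setLIntegral_mono (by fun_prop) fun t (ht : 0 < t) => ?_
        have hset :
            {c | t < ν.real (Ici c) ^ β} = {c | ENNReal.ofReal (t ^ β⁻¹) < ν (Ici c)} := by
          ext c
          rw [mem_ofPred_eq, mem_ofPred_eq, ENNReal.ofReal_lt_iff_lt_toReal (by positivity)
            (measure_ne_top _ _), ← Real.rpow_inv_lt_iff_of_pos ht.le measureReal_nonneg hβ]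
          rfl
        rw [hset, ENNReal.ofReal_sub _ (by positivity), ENNReal.ofReal_one]
        exact measure_lt_measure_Ici_le ν _
    _ = ENNReal.ofReal (1 / (1 + β)) := setLIntegral_Ioi_ofReal_one_sub_rpow_inv hβ

section Independence

variable {Ω ι κ : Type*} [MeasurableSpace Ω] {P : Measure Ω}

theorem ProbabilityTheory.iIndepFun.measure_preimage_iInf_Ici [Fintype ι] [Nonempty ι]
    {X : ι → Ω → ℝ} (hX : iIndepFun X P) (c : ℝ) :
    P ((fun ω => ⨅ i, X i ω) ⁻¹' Ici c) = ∏ i, P (X i ⁻¹' Ici c) := by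
  have hpre : (fun ω => ⨅ i, X i ω) ⁻¹' Ici c = ⋂ i, X i ⁻¹' Ici c := by
    ext ω
    simp [le_ciInf_iff (Finite.bddBelow_range _)]
  rw [hpre, hX.meas_iInter fun i => ⟨Ici c, measurableSet_Ici, rfl⟩]

theorem ProbabilityTheory.iIndepFun.indepFun_inl_inr [Fintype ι] [Fintype κ]
    {X : ι ⊕ κ → Ω → ℝ} (hX : iIndepFun X P) (hXm : ∀ i, AEMeasurable (X i) P) :
    IndepFun (fun ω i => X (.inl i) ω) (fun ω j => X (.inr j) ω) P := by
  classical
  have hdisj : Disjoint (Finset.univ.map (.inl : ι ↪ ι ⊕ κ)) (Finset.univ.map .inr) := by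
    simp [Finset.disjoint_left]
  exact (hX.indepFun_finset₀ _ _ hdisj hXm).comp
    (measurable_pi_lambda (fun t i => t ⟨.inl i, Finset.mem_map_of_mem _ (Finset.mem_univ i)⟩)
      fun i => measurable_pi_apply _)
    (measurable_pi_lambda (fun t j => t ⟨.inr j, Finset.mem_map_of_mem _ (Finset.mem_univ j)⟩)
      fun j => measurable_pi_apply _)

theorem nullSingletonClass_map_iInf [Finite ι] [Nonempty ι] {X : ι → Ω → ℝ}
    (hXm : ∀ i, AEMeasurable (X i) P) (hX : ∀ i c, P (X i ⁻¹' {c}) = 0) :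
    NullSingletonClass (P.map fun ω => ⨅ i, X i ω) where
  measure_singleton c := by
    rw [Measure.map_apply_of_aemeasurable (AEMeasurable.iInf hXm) (measurableSet_singleton c)]
    refine measure_mono_null (fun ω (hω : ⨅ i, X i ω = c) => ?_) (measure_iUnion_null (hX · c))
    obtain ⟨i, hi⟩ := exists_eq_ciInf_of_finite (f := fun i => X i ω)
    exact mem_iUnion.2 ⟨i, hi.trans hω⟩

variable [IsProbabilityMeasure P]

theorem ofReal_div_one_add_le_measure_lt {U V : Ω → ℝ} (hU : AEMeasurable U P)
    (hV : AEMeasurable V P) (hUV : IndepFun U V P) [NullSingletonClass (P.map V)] {β : ℝ}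
    (hβ : 0 < β) (hsurv : ∀ c, P (U ⁻¹' Ici c) ≤ P (V ⁻¹' Ici c) ^ β) :
    ENNReal.ofReal (β / (1 + β)) ≤ P {ω | U ω < V ω} := by
  have hle : MeasurableSet {p : ℝ × ℝ | p.2 ≤ p.1} :=
    measurableSet_le measurable_snd measurable_fst
  have hVU : P {ω | V ω ≤ U ω} ≤ ENNReal.ofReal (1 / (1 + β)) :=
    calc P {ω | V ω ≤ U ω} = (P.map U).prod (P.map V) {p | p.2 ≤ p.1} := by
          rw [← (indepFun_iff_map_prod_eq_prod_map_map hU hV).1 hUV,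
            Measure.map_apply_of_aemeasurable (hU.prodMk hV) hle]
          rfl
      _ = ∫⁻ c, P.map U (Ici c) ∂P.map V := Measure.prod_apply_symm hle
      _ ≤ ∫⁻ c, P.map V (Ici c) ^ β ∂P.map V := lintegral_mono fun c => by
          simpa only [Measure.map_apply_of_aemeasurable hU measurableSet_Ici,
            Measure.map_apply_of_aemeasurable hV measurableSet_Ici] using hsurv c
      _ ≤ ENNReal.ofReal (1 / (1 + β)) :=
          have := Measure.isProbabilityMeasure_map (μ := P) hV
          lintegral_measure_Ici_rpow_le _ hβ
  have hcompl : {ω | U ω < V ω} = {ω | V ω ≤ U ω}ᶜ := by ext; simp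
  have hnull : NullMeasurableSet {ω | V ω ≤ U ω} P :=
    (hU.prodMk hV).nullMeasurable hle
  rw [hcompl, prob_compl_eq_one_sub₀ hnull, show β / (1 + β) = 1 - 1 / (1 + β) by
    field_simp; ring, ENNReal.ofReal_sub _ (by positivity), ENNReal.ofReal_one]
  exact tsub_le_tsub_left hVU 1

theorem ofReal_div_one_add_le_measure_iInf_lt_iInf [Fintype ι] [Fintype κ]
    [Nonempty ι] [Nonempty κ] {X : ι ⊕ κ → Ω → ℝ} (hX : iIndepFun X P)
    (hXm : ∀ i, AEMeasurable (X i) P) (hatom : ∀ j c, P (X (.inr j) ⁻¹' {c}) = 0) {β : ℝ}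
    (hβ : 0 < β)
    (hsurv : ∀ c, ∏ i, P (X (.inl i) ⁻¹' Ici c) ≤ (∏ j, P (X (.inr j) ⁻¹' Ici c)) ^ β) :
    ENNReal.ofReal (β / (1 + β)) ≤ P {ω | ⨅ i, X (.inl i) ω < ⨅ j, X (.inr j) ω} := by
  have hUV := (hX.indepFun_inl_inr hXm).comp
    (Measurable.iInf measurable_pi_apply) (Measurable.iInf measurable_pi_apply)
  have := nullSingletonClass_map_iInf (fun j => hXm (.inr j)) hatom
  refine ofReal_div_one_add_le_measure_lt (AEMeasurable.iInf fun i => hXm _)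
    (AEMeasurable.iInf fun j => hXm _) hUV hβ fun c => ?_
  have hXl : iIndepFun (fun i => X (.inl i)) P := hX.precomp Sum.inl_injective
  have hXr : iIndepFun (fun j => X (.inr j)) P := hX.precomp Sum.inr_injective
  rw [hXl.measure_preimage_iInf_Ici, hXr.measure_preimage_iInf_Ici]
  exact hsurv c

end Independence

namespace MeasureTheory.pdf.IsUniform

variable {Ω : Type*} [MeasurableSpace Ω] {P : Measure Ω} {X : Ω → ℝ} {a b : ℝ}

theorem measure_preimage_Icc (hab : a < b) (hX : IsUniform X (Icc a b) P)
    {A : Set ℝ} (hA : MeasurableSet A) :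
    P (X ⁻¹' A) = volume (Icc a b ∩ A) / ENNReal.ofReal (b - a) := by
  rw [hX.measure_preimage (by simpa using hab) measure_Icc_lt_top.ne hA, Real.volume_Icc]

theorem aemeasurable_Icc (hab : a < b) (hX : IsUniform X (Icc a b) P) : AEMeasurable X P :=
  hX.aemeasurable (by simpa using hab) measure_Icc_lt_top.ne

theorem measure_preimage_Ici (hab : a < b) (hX : IsUniform X (Icc a b) P) (c : ℝ) :
    P (X ⁻¹' Ici c) = ENNReal.ofReal ((b - max a c) / (b - a)) := by
  have hinter : Icc a b ∩ Ici c = Icc (max a c) b := by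
    ext; simp [and_right_comm]
  rw [hX.measure_preimage_Icc hab measurableSet_Ici, hinter, Real.volume_Icc,
    ENNReal.ofReal_div_of_pos (sub_pos.2 hab)]

theorem measure_preimage_singleton (hab : a < b) (hX : IsUniform X (Icc a b) P) (c : ℝ) :
    P (X ⁻¹' {c}) = 0 := by
  rw [hX.measure_preimage_Icc hab (measurableSet_singleton c),
    measure_mono_null inter_subset_right (measure_singleton c), ENNReal.zero_div]

end MeasureTheory.pdf.IsUniform

section Uniform

variable {Ω : Type*} [MeasurableSpace Ω] {P : Measure Ω} [IsProbabilityMeasure P]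

theorem prod_measure_preimage_Ici_le_rpow {ι κ : Type*} [Fintype ι] [Fintype κ] [Nonempty κ]
    {a b : ℝ} {x : κ → ℝ} (hax : ∀ j, a ≤ x j) (hxb : ∀ j, x j < b) {X : ι → Ω → ℝ}
    {Y : κ → Ω → ℝ} (hX : ∀ i, pdf.IsUniform (X i) (Icc a b) P)
    (hY : ∀ j, pdf.IsUniform (Y j) (Icc (x j) b) P) {β : ℝ}
    (hβ : β ≤ Fintype.card ι / Fintype.card κ) (c : ℝ) :
    ∏ i, P (X i ⁻¹' Ici c) ≤ (∏ j, P (Y j ⁻¹' Ici c)) ^ β := by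
  obtain ⟨j₀⟩ := ‹Nonempty κ›
  have hab : a < b := (hax j₀).trans_lt (hxb j₀)
  rw [Finset.prod_congr rfl fun i _ => (hX i).measure_preimage_Ici hab c, Finset.prod_const,
    Finset.card_univ]
  refine ENNReal.pow_le_rpow_of_pow_le Fintype.card_pos
    (Finset.prod_le_one' fun j _ => prob_le_one) ?_ hβ
  rw [← Finset.card_univ]
  refine Finset.pow_card_le_prod _ _ _ fun j _ => ?_
  rw [(hY j).measure_preimage_Ici (hxb j) c]
  exact ofReal_sub_max_div_sub_le (hax j) (hxb j) c

end Uniform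

/-- Two independent systems of uniform random variables as in Statement 3:
`Z₀ᵢ ~ Uniform[x₀,1]` (`1 ≤ i ≤ m₀`), `Zʲ ~ Uniform[x_j,1]` (`1 ≤ j ≤ k`),
`Z̄₀ᵢ ~ Uniform[x̄₀,1]` (`1 ≤ i ≤ m̄₀`), `Z̄ˡ ~ Uniform[x̄_l,1]` (`1 ≤ l ≤ k̄`), all mutually
independent, with `x₀ ≤ min_j x_j` and `x̄₀ ≤ min_l x̄_l`, all parameters in `(0,1)`. Then
`P(min Z₀ ∧ min Z̄₀ < min Z ∧ min Z̄) ≥ min(m₀/(m₀+k), m̄₀/(m̄₀+k̄))`. -/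
theorem min_uniform_comparison_two_systems
    {Ω : Type} [MeasurableSpace Ω] (P : Measure Ω) [IsProbabilityMeasure P]
    (m₀ k mb₀ kb : ℕ) (hm₀ : 0 < m₀) (hk : 0 < k) (hmb₀ : 0 < mb₀) (hkb : 0 < kb)
    (x₀ : ℝ) (x : Fin k → ℝ) (xb₀ : ℝ) (xb : Fin kb → ℝ)
    (hx₀ : x₀ ∈ Set.Ioo (0 : ℝ) 1) (hx : ∀ j, x j ∈ Set.Ioo (0 : ℝ) 1)
    (hxb₀ : xb₀ ∈ Set.Ioo (0 : ℝ) 1) (hxb : ∀ l, xb l ∈ Set.Ioo (0 : ℝ) 1)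
    (hx₀le : ∀ j, x₀ ≤ x j) (hxb₀le : ∀ l, xb₀ ≤ xb l)
    (Z₀ : Fin m₀ → Ω → ℝ) (Z : Fin k → Ω → ℝ)
    (Zb₀ : Fin mb₀ → Ω → ℝ) (Zb : Fin kb → Ω → ℝ)
    (hZ₀ : ∀ i, pdf.IsUniform (Z₀ i) (Set.Icc x₀ 1) P)
    (hZ : ∀ j, pdf.IsUniform (Z j) (Set.Icc (x j) 1) P)
    (hZb₀ : ∀ i, pdf.IsUniform (Zb₀ i) (Set.Icc xb₀ 1) P)
    (hZb : ∀ l, pdf.IsUniform (Zb l) (Set.Icc (xb l) 1) P)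
    (hindep : iIndepFun
      (Sum.elim (Sum.elim Z₀ Z) (Sum.elim Zb₀ Zb)) P) :
    ENNReal.ofReal (min ((m₀ : ℝ) / ((m₀ : ℝ) + (k : ℝ)))
        ((mb₀ : ℝ) / ((mb₀ : ℝ) + (kb : ℝ)))) ≤
      P {ω | min (⨅ i : Fin m₀, Z₀ i ω) (⨅ i : Fin mb₀, Zb₀ i ω) <
              min (⨅ j : Fin k, Z j ω) (⨅ l : Fin kb, Zb l ω)} := by
  have := NeZero.of_pos hm₀
  have := NeZero.of_pos hk
  have := NeZero.of_pos hmb₀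
  have := NeZero.of_pos hkb
  set Y := Sum.elim (Sum.elim Z₀ Zb₀) (Sum.elim Z Zb)
  have hY : iIndepFun Y P := by
    convert hindep.precomp
      (Equiv.sumSumSumComm (Fin m₀) (Fin mb₀) (Fin k) (Fin kb)).injective using 1
    funext i
    rcases i with (i | i) | (i | i) <;> rfl
  have hYm : ∀ i, AEMeasurable (Y i) P := by
    rintro ((i | i) | (j | l))
    exacts [(hZ₀ i).aemeasurable_Icc hx₀.2, (hZb₀ i).aemeasurable_Icc hxb₀.2,
      (hZ j).aemeasurable_Icc (hx j).2, (hZb l).aemeasurable_Icc (hxb l).2]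
  have hevent : {ω | min (⨅ i, Z₀ i ω) (⨅ i, Zb₀ i ω) < min (⨅ j, Z j ω) (⨅ l, Zb l ω)} =
      {ω | ⨅ i, Y (.inl i) ω < ⨅ j, Y (.inr j) ω} := by
    ext ω
    exact (congrArg₂ (· < ·) (ciInf_sum fun i => Y (.inl i) ω)
      (ciInf_sum fun j => Y (.inr j) ω)).to_iff.symm
  rw [hevent, min_div_add_eq (by positivity) (by positivity) (by positivity) (by positivity)]
  refine ofReal_div_one_add_le_measure_iInf_lt_iInf hY hYm ?_ (by positivity) fun c => ?_
  · rintro (j | l) c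
    exacts [(hZ j).measure_preimage_singleton (hx j).2 c,
      (hZb l).measure_preimage_singleton (hxb l).2 c]
  rw [Fintype.prod_sum_type, Fintype.prod_sum_type,
    ENNReal.mul_rpow_of_nonneg _ _ (by positivity)]
  exact mul_le_mul'
    (prod_measure_preimage_Ici_le_rpow hx₀le (fun j => (hx j).2) hZ₀ hZ (by simp) c)
    (prod_measure_preimage_Ici_le_rpow hxb₀le (fun l => (hxb l).2) hZb₀ hZb (by simp) c)
end

section
/- Under Assumption 2.3, there exist C > 0, κ₀ ∈ (0, 1/4), and n₀ ≥ 2, all depending only on (A₁, A₂, τ, ν), such that for all n ≥ n₀, all κ ∈ (0, κ₀], and all (λ, u) ∈ I_κ^{(n),2}: φ_λ^{(n)}(κu)/φ_λ^{(n)}(u) ≤ φ_λ^{(n)}((1−κ)u)/φ_λ^{(n)}(u) ≤ 1/(1 + Cκ). -/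
open scoped Classical
open MeasureTheory ProbabilityTheory Filter

noncomputable section

/-- `α = 1/(τ−1)`. -/
def alphaExp (τ : ℝ) : ℝ := 1 / (τ - 1)

/-- `ρ = (τ−2)/(τ−1)`. -/
def rhoExp (τ : ℝ) : ℝ := (τ - 2) / (τ - 1)

/-- `η = (τ−3)/(τ−1)`. -/
def etaExp (τ : ℝ) : ℝ := (τ - 3) / (τ - 1)

/-- `L_n = Σ_{i=1}^n w_i^{(n)}`. -/
def Lseq (w : ℕ → ℕ → ℝ) (n : ℕ) : ℝ := ∑ i ∈ Finset.Icc 1 n, w n i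

/-- `ℓ_n = Σ_{i=2}^n w_i^{(n)}`. -/
def ellSeq (w : ℕ → ℕ → ℝ) (n : ℕ) : ℝ := ∑ i ∈ Finset.Icc 2 n, w n i

/-- `σ₂^{(n)} = n^{−1} Σ_{i=2}^n (w_i^{(n)})²`. -/
def sigma2 (w : ℕ → ℕ → ℝ) (n : ℕ) : ℝ := (∑ i ∈ Finset.Icc 2 n, (w n i) ^ 2) / (n : ℝ)

/-- `ν_n = n σ₂^{(n)}/ℓ_n`. -/
def nuSeq (w : ℕ → ℕ → ℝ) (n : ℕ) : ℝ := (n : ℝ) * sigma2 w n / ellSeq w n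

/-- `p^n_λ = (1 + λ n^{−η})/ν_n`. -/
def pEdge (τ : ℝ) (w : ℕ → ℕ → ℝ) (n : ℕ) (lam : ℝ) : ℝ :=
  (1 + lam / (n : ℝ) ^ etaExp τ) / nuSeq w n

/-- `θ_{j,λ}^{(n)} = (1 + λ n^{−η}) w_j^{(n)}/(n^α (σ₂^{(n)})^{1/2})`. -/
def thetaSeq (τ : ℝ) (w : ℕ → ℕ → ℝ) (n : ℕ) (lam : ℝ) (j : ℕ) : ℝ :=
  (1 + lam / (n : ℝ) ^ etaExp τ) * w n j / ((n : ℝ) ^ alphaExp τ * Real.sqrt (sigma2 w n))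

/-- `Φ_λ^{(n)}(u) = λu − (1 + λ n^{−η})^{−1} Σ_{j=2}^n θ_{j,λ}(uθ_{j,λ} + e^{−uθ_{j,λ}} − 1)`. -/
def PhiFn (τ : ℝ) (w : ℕ → ℕ → ℝ) (n : ℕ) (lam : ℝ) (u : ℝ) : ℝ :=
  lam * u - (1 + lam / (n : ℝ) ^ etaExp τ)⁻¹ *
    ∑ j ∈ Finset.Icc 2 n,
      thetaSeq τ w n lam j *
        (u * thetaSeq τ w n lam j + Real.exp (-(u * thetaSeq τ w n lam j)) - 1)

/-- `φ_λ^{(n)}(u) = Σ_{j=2}^n θ_{j,λ}² (uθ_{j,λ} + e^{−uθ_{j,λ}} − 1)/(uθ_{j,λ})`. -/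
def phiFn (τ : ℝ) (w : ℕ → ℕ → ℝ) (n : ℕ) (lam : ℝ) (u : ℝ) : ℝ :=
  ∑ j ∈ Finset.Icc 2 n,
    (thetaSeq τ w n lam j) ^ 2 *
      (u * thetaSeq τ w n lam j + Real.exp (-(u * thetaSeq τ w n lam j)) - 1) /
        (u * thetaSeq τ w n lam j)

/-- Assumption 2.3 of the paper for a triangular array of weights `w n i` (`1 ≤ i ≤ n`),
with degree exponent `τ ∈ (3,4)`, constants `A₁, A₂ > 0`, supercriticality parameter `ν > 1`
and limiting rescaled weights `θstar`. -/
structure Assumption23 (τ A₁ A₂ ν : ℝ) (θstar : ℕ → ℝ) (w : ℕ → ℕ → ℝ) : Prop where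
  tau_gt : 3 < τ
  tau_lt : τ < 4
  A1_pos : 0 < A₁
  A2_pos : 0 < A₂
  nu_gt_one : 1 < ν
  wpos : ∀ n : ℕ, 1 ≤ n → ∀ i ∈ Finset.Icc 1 n, 0 < w n i
  wmono : ∀ n : ℕ, 1 ≤ n → ∀ i j : ℕ, 1 ≤ i → i ≤ j → j ≤ n → w n j ≤ w n i
  supercrit :
    Filter.liminf (fun n : ℕ => (∑ j ∈ Finset.Icc 1 n, (w n j) ^ 2) / Lseq w n) Filter.atTop = ν
  theta_pos : ∀ i : ℕ, 1 ≤ i → 0 < θstar i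
  theta_lim : ∀ i : ℕ, 1 ≤ i →
    Filter.Tendsto
      (fun n : ℕ => w n i / (n : ℝ) ^ alphaExp τ *
        Real.sqrt ((n : ℝ) / ∑ j ∈ Finset.Icc 1 n, (w n j) ^ 2))
      Filter.atTop (nhds (θstar i))
  wlb : ∀ n : ℕ, 2 ≤ n → ∀ i : ℕ, 1 ≤ i → 2 * i ≤ n →
    A₁ * ((n : ℝ) / (i : ℝ)) ^ alphaExp τ ≤ w n i
  wub : ∀ n : ℕ, 2 ≤ n → ∀ i : ℕ, 1 ≤ i → 2 * i ≤ n →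
    w n i ≤ A₂ * ((n : ℝ) / (i : ℝ)) ^ alphaExp τ
  wnlb : ∀ n : ℕ, 2 ≤ n →
    A₁ * Real.log n ^ ((3 : ℝ) / 2) * (n : ℝ) ^ (-(etaExp τ / 4)) ≤ w n n

/-- Assumption 6.1: `ν_n ≥ ν' := 1 + (ν−1)/2` for all `n`. -/
def Assumption61 (ν : ℝ) (w : ℕ → ℕ → ℝ) : Prop :=
  ∀ n : ℕ, 1 ≤ n → 1 + (ν - 1) / 2 ≤ nuSeq w n

/-- Index type for the (unordered) pairs `1 ≤ i < j ≤ n`. -/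
def EdgeIdx (n : ℕ) : Type := {p : ℕ × ℕ // 1 ≤ p.1 ∧ p.1 < p.2 ∧ p.2 ≤ n}

/-- `X` is (a version of) the random graph `G_n(λ)` on vertex set `{1, …, n}`: edges appear
independently, the edge `{i,j}` (for `1 ≤ i < j ≤ n`) with probability
`1 − exp(−p^n_λ w_i w_j/ℓ_n)`, and there are no other edges. -/
def IsGnLambda {Ω : Type} [MeasurableSpace Ω] (P : Measure Ω)
    (τ : ℝ) (w : ℕ → ℕ → ℝ) (n : ℕ) (lam : ℝ) (X : Ω → SimpleGraph ℕ) : Prop :=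
  (∀ ω i j, (X ω).Adj i j → i ∈ Finset.Icc 1 n ∧ j ∈ Finset.Icc 1 n) ∧
  (∀ i j : ℕ, 1 ≤ i → i < j → j ≤ n →
    P {ω | (X ω).Adj i j} =
      ENNReal.ofReal (1 - Real.exp (-(pEdge τ w n lam * w n i * w n j / ellSeq w n)))) ∧
  iIndepSet (fun e : EdgeIdx n => {ω | (X ω).Adj e.1.1 e.1.2}) P

/-- The weight `𝒲(C(1,G)) = Σ_{i ∈ C(1,G)} w_i` of the component of vertex `1` in `G`. -/
def compWeight (w : ℕ → ℕ → ℝ) (n : ℕ) (G : SimpleGraph ℕ) : ℝ :=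
  ∑ i ∈ Finset.Icc 1 n, if G.Reachable 1 i then w n i else 0

/-!
With `F x = (x + e^{-x} - 1) / x` we have `φ_λ(u) = Σⱼ θⱼ² F(u θⱼ)`. The kernel `F` is increasing,
`F x ≤ min 1 (x / 2)`, and its slope is at least `1/9` on `(0, 2]`; hence every term with
`u θⱼ ≤ 2` loses at least the fraction `2κ/9` of itself when `u` is replaced by `(1 - κ) u`.
It remains to see that these small terms carry a fixed fraction of `φ_λ(u)`. Since
`θⱼ ≍ j^{-α}` for `j ≤ n/2` and `u ≲ (n/2)^α`, the big terms (`u θⱼ > 2`) have indices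
`j ≤ b` for some `b < n/8`, and their total is at most `Σ_{j ≤ b} θⱼ² ≲ b^{1-2α}`; meanwhile each
of the `2b` indices `j ∈ (b, 3b]` is small and contributes `θⱼ² F(u θⱼ) ≳ u θⱼ³ ≳ b^{-2α}`.
-/

open Real Set

def phiKernel (x : ℝ) : ℝ := (x + exp (-x) - 1) / x

theorem hasDerivAt_phiKernel {x : ℝ} (hx : x ≠ 0) :
    HasDerivAt phiKernel ((1 - (1 + x) * exp (-x)) / x ^ 2) x := by
  have hnum : HasDerivAt (fun t => t + exp (-t) - 1) (1 - exp (-x)) x := by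
    simpa [sub_eq_add_neg] using ((hasDerivAt_id x).add (hasDerivAt_neg x).exp).sub_const 1
  exact (hnum.div (hasDerivAt_id' x) hx).congr_deriv (by ring)

theorem phiKernel_pos {x : ℝ} (hx : 0 < x) : 0 < phiKernel x :=
  div_pos (by linarith [add_one_lt_exp (neg_ne_zero.2 hx.ne')]) hx

theorem phiKernel_le_one {x : ℝ} (hx : 0 < x) : phiKernel x ≤ 1 := by
  rw [phiKernel, div_le_one hx]
  linarith [exp_le_one_iff.2 (neg_nonpos.2 hx.le)]

theorem phiKernel_le_half_mul {x : ℝ} (hx : 0 < x) : phiKernel x ≤ x / 2 := by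
  -- `(1 - x + x²/2)(1 + x + x²/2) = 1 + x⁴/4 ≥ 1` bounds `exp (-x)` from above
  have hexp : exp (-x) ≤ 1 - x + x ^ 2 / 2 := by
    rw [exp_neg, inv_le_iff_one_le_mul₀ (exp_pos x)]
    calc (1 : ℝ) ≤ (1 - x + x ^ 2 / 2) * (1 + x + x ^ 2 / 2) := by nlinarith [pow_nonneg hx.le 4]
      _ ≤ (1 - x + x ^ 2 / 2) * exp x := by
        gcongr
        · nlinarith [sq_nonneg (x - 1)]
        · exact quadratic_le_exp_of_nonneg hx.le
  rw [phiKernel, div_le_iff₀ hx]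
  nlinarith

theorem quarter_mul_le_phiKernel {x : ℝ} (hx : 0 < x) (hx2 : x ≤ 2) : x / 4 ≤ phiKernel x := by
  have hexp : (1 - x / 2) ^ 2 ≤ exp (-x) := by
    calc (1 - x / 2) ^ 2 ≤ exp (-(x / 2)) ^ 2 :=
          pow_le_pow_left₀ (by linarith) (one_sub_le_exp_neg _) 2
      _ = exp (-x) := by rw [← exp_nat_mul]; ring_nf
  rw [phiKernel, le_div_iff₀ hx]
  nlinarith

theorem one_add_mul_exp_neg_le {x : ℝ} (hx : 0 ≤ x) (hx2 : x ≤ 2) :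
    (1 + x) * exp (-x) ≤ 1 - x ^ 2 / 9 := by
  have h := sum_le_exp_of_nonneg hx 4
  simp only [Finset.sum_range_succ, Finset.sum_range_zero, Nat.factorial] at h
  norm_num at h
  rw [exp_neg, mul_inv_le_iff₀ (exp_pos x)]
  calc 1 + x ≤ (1 - x ^ 2 / 9) * (1 + x + x ^ 2 / 2 + x ^ 3 / 6) := by
        nlinarith [pow_nonneg hx 3, pow_nonneg hx 4, mul_nonneg (pow_nonneg hx 2) (sub_nonneg.2 hx2),
          mul_nonneg (pow_nonneg hx 3) (sub_nonneg.2 hx2), mul_nonneg (pow_nonneg hx 4) (sub_nonneg.2 hx2)]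
    _ ≤ (1 - x ^ 2 / 9) * exp x := by
        gcongr
        nlinarith

theorem phiKernel_monotoneOn : MonotoneOn phiKernel (Ioi 0) := by
  have hd : ∀ x ∈ Ioi (0 : ℝ), HasDerivAt phiKernel ((1 - (1 + x) * exp (-x)) / x ^ 2) x :=
    fun x hx => hasDerivAt_phiKernel (ne_of_gt hx)
  refine monotoneOn_of_deriv_nonneg (convex_Ioi 0)
    (fun x hx => (hd x hx).continuousAt.continuousWithinAt)
    (fun x hx => (hd x (interior_subset hx)).differentiableAt.differentiableWithinAt)
    (fun x hx => ?_)
  rw [interior_Ioi] at hx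
  rw [(hd x hx).deriv]
  have : (1 + x) * exp (-x) ≤ 1 := by
    rw [exp_neg, mul_inv_le_iff₀ (exp_pos x)]
    linarith [add_one_le_exp x]
  exact div_nonneg (by linarith) (sq_nonneg x)

theorem div_nine_le_phiKernel_sub {x y : ℝ} (hy : 0 < y) (hyx : y ≤ x) (hx : x ≤ 2) :
    (x - y) / 9 ≤ phiKernel x - phiKernel y := by
  have hd : ∀ t ∈ Ioc (0 : ℝ) 2, HasDerivAt (fun t => phiKernel t - t / 9)
      ((1 - (1 + t) * exp (-t)) / t ^ 2 - 1 / 9) t :=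
    fun t ht => (hasDerivAt_phiKernel (ne_of_gt ht.1)).sub ((hasDerivAt_id t).div_const 9)
  have hmono : MonotoneOn (fun t => phiKernel t - t / 9) (Ioc 0 2) := by
    refine monotoneOn_of_deriv_nonneg (convex_Ioc 0 2)
      (fun t ht => (hd t ht).continuousAt.continuousWithinAt)
      (fun t ht => (hd t (interior_subset ht)).differentiableAt.differentiableWithinAt)
      (fun t ht => ?_)
    rw [interior_Ioc] at ht
    rw [(hd t (Ioo_subset_Ioc_self ht)).deriv, sub_nonneg, le_div_iff₀ (by nlinarith [ht.1])]
    nlinarith [one_add_mul_exp_neg_le ht.1.le ht.2.le]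
  linarith [hmono ⟨hy, hyx.trans hx⟩ ⟨hy.trans_le hyx, hx⟩ hyx]

theorem two_mul_div_nine_mul_phiKernel_le {κ x : ℝ} (hκ0 : 0 < κ) (hκ1 : κ < 1) (hx0 : 0 < x)
    (hx2 : x ≤ 2) : 2 * κ / 9 * phiKernel x ≤ phiKernel x - phiKernel ((1 - κ) * x) := by
  have hgap := div_nine_le_phiKernel_sub (mul_pos (sub_pos.2 hκ1) hx0)
    (by nlinarith : (1 - κ) * x ≤ x) hx2
  nlinarith [phiKernel_le_half_mul hx0]

theorem sum_Icc_two_rpow_neg_le {β : ℝ} (hβ0 : 0 ≤ β) (hβ1 : β < 1) {b : ℕ} (hb : 1 ≤ b) :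
    ∑ j ∈ Finset.Icc 2 b, (j : ℝ) ^ (-β) ≤ (b : ℝ) ^ (1 - β) / (1 - β) := by
  have hb' : (1 : ℝ) + (b - 1 : ℕ) = b := by rw [Nat.cast_sub hb]; ring
  have hanti : AntitoneOn (fun x : ℝ => x ^ (-β)) (Icc 1 (1 + (b - 1 : ℕ))) :=
    fun x hx y _ hxy => rpow_le_rpow_of_nonpos (by linarith [hx.1]) hxy (by linarith)
  calc ∑ j ∈ Finset.Icc 2 b, (j : ℝ) ^ (-β)
      = ∑ i ∈ Finset.range (b - 1), ((1 : ℝ) + (i + 1 : ℕ)) ^ (-β) := by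
        rw [← Finset.Ico_add_one_right_eq_Icc, Finset.sum_Ico_eq_sum_range,
          show b + 1 - 2 = b - 1 by omega]
        refine Finset.sum_congr rfl fun i _ => ?_
        push_cast; ring_nf
    _ ≤ ∫ x in (1 : ℝ)..1 + (b - 1 : ℕ), x ^ (-β) := hanti.sum_le_integral
    _ = ((b : ℝ) ^ (1 - β) - 1) / (1 - β) := by
        rw [hb', integral_rpow (Or.inl (by linarith)), one_rpow]
        ring_nf
    _ ≤ (b : ℝ) ^ (1 - β) / (1 - β) := by
        gcongr
        linarith

section WeightedPhi

variable {ι : Type*} (s : Finset ι) (θ : ι → ℝ)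

def weightedPhi (u : ℝ) : ℝ := ∑ j ∈ s, θ j ^ 2 * phiKernel (u * θ j)

variable {s θ}

theorem weightedPhi_nonneg (hθ : ∀ j ∈ s, 0 < θ j) {u : ℝ} (hu : 0 < u) :
    0 ≤ weightedPhi s θ u :=
  Finset.sum_nonneg fun j hj => mul_nonneg (sq_nonneg _) (phiKernel_pos (mul_pos hu (hθ j hj))).le

theorem weightedPhi_pos (hθ : ∀ j ∈ s, 0 < θ j) (hs : s.Nonempty) {u : ℝ} (hu : 0 < u) :
    0 < weightedPhi s θ u :=
  Finset.sum_pos (fun j hj => mul_pos (pow_pos (hθ j hj) 2) (phiKernel_pos (mul_pos hu (hθ j hj))))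
    hs

theorem weightedPhi_mono (hθ : ∀ j ∈ s, 0 < θ j) {u v : ℝ} (hu : 0 < u) (huv : u ≤ v) :
    weightedPhi s θ u ≤ weightedPhi s θ v :=
  Finset.sum_le_sum fun j hj => by
    have hθj := hθ j hj
    gcongr
    exact phiKernel_monotoneOn (mul_pos hu hθj) (mul_pos (hu.trans_le huv) hθj)
      (mul_le_mul_of_nonneg_right huv hθj.le)

theorem weightedPhi_subset_le (hθ : ∀ j ∈ s, 0 < θ j) {t : Finset ι} (hts : t ⊆ s) {u : ℝ}
    (hu : 0 < u) : weightedPhi t θ u ≤ weightedPhi s θ u :=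
  Finset.sum_le_sum_of_subset_of_nonneg hts fun j hj _ =>
    mul_nonneg (sq_nonneg _) (phiKernel_pos (mul_pos hu (hθ j hj))).le

theorem weightedPhi_le_sum_sq (hθ : ∀ j ∈ s, 0 < θ j) {u : ℝ} (hu : 0 < u) :
    weightedPhi s θ u ≤ ∑ j ∈ s, θ j ^ 2 :=
  Finset.sum_le_sum fun j hj =>
    mul_le_of_le_one_right (sq_nonneg _) (phiKernel_le_one (mul_pos hu (hθ j hj)))

theorem mul_weightedPhi_le_sub (hθ : ∀ j ∈ s, 0 < θ j) {κ u K : ℝ} (hκ0 : 0 < κ) (hκ1 : κ < 1)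
    (hu : 0 < u) (hK : 0 ≤ K)
    (hbig : weightedPhi {j ∈ s | ¬u * θ j ≤ 2} θ u ≤ K * weightedPhi {j ∈ s | u * θ j ≤ 2} θ u) :
    2 / (9 * (1 + K)) * κ * weightedPhi s θ u ≤
      weightedPhi s θ u - weightedPhi s θ ((1 - κ) * u) := by
  have hsplit : weightedPhi s θ u = weightedPhi {j ∈ s | u * θ j ≤ 2} θ u +
      weightedPhi {j ∈ s | ¬u * θ j ≤ 2} θ u :=
    (Finset.sum_filter_add_sum_filter_not s _ _).symm
  have hsmall : 0 ≤ weightedPhi {j ∈ s | u * θ j ≤ 2} θ u :=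
    weightedPhi_nonneg (fun j hj => hθ j (Finset.mem_filter.1 hj).1) hu
  have hgap : 2 * κ / 9 * weightedPhi {j ∈ s | u * θ j ≤ 2} θ u ≤
      weightedPhi s θ u - weightedPhi s θ ((1 - κ) * u) := by
    simp only [weightedPhi]
    rw [← Finset.sum_sub_distrib, Finset.mul_sum]
    refine (Finset.sum_le_sum fun j hj => ?_).trans
      (Finset.sum_le_sum_of_subset_of_nonneg (Finset.filter_subset _ s) fun j hj _ => ?_)
    · obtain ⟨hjs, hj2⟩ := Finset.mem_filter.1 hj
      have := two_mul_div_nine_mul_phiKernel_le hκ0 hκ1 (mul_pos hu (hθ j hjs)) hj2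
      rw [mul_assoc (1 - κ)]
      nlinarith [sq_nonneg (θ j)]
    · have hθj := hθ j hj
      refine sub_nonneg.2 (mul_le_mul_of_nonneg_left ?_ (sq_nonneg _))
      exact phiKernel_monotoneOn (mul_pos (mul_pos (sub_pos.2 hκ1) hu) hθj) (mul_pos hu hθj)
        (by nlinarith [mul_pos (mul_pos hκ0 hu) hθj])
  calc 2 / (9 * (1 + K)) * κ * weightedPhi s θ u
      ≤ 2 / (9 * (1 + K)) * κ * ((1 + K) * weightedPhi {j ∈ s | u * θ j ≤ 2} θ u) := by
        gcongr; linarith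
    _ = 2 * κ / 9 * weightedPhi {j ∈ s | u * θ j ≤ 2} θ u := by field_simp
    _ ≤ _ := hgap

end WeightedPhi

theorem ratio_bounds_of_gap {a b c D : ℝ} (hc : 0 < c) (hD : 0 ≤ D) (hab : a ≤ b)
    (hgap : D * c ≤ c - b) : a / c ≤ b / c ∧ b / c ≤ 1 / (1 + D) := by
  refine ⟨div_le_div_of_nonneg_right hab hc.le, ?_⟩
  rw [div_le_div_iff₀ hc (by linarith)]
  have hb : b ≤ c - D * c := by linarith
  nlinarith [mul_le_mul_of_nonneg_left hb hD, mul_nonneg (mul_nonneg hD hD) hc.le]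

structure PowerLawProfile (n : ℕ) (α a A : ℝ) (θ : ℕ → ℝ) : Prop where
  pos : ∀ j ∈ Finset.Icc 1 n, 0 < θ j
  antitoneOn : AntitoneOn θ (Set.Icc 1 n)
  le_of_two_mul_le : ∀ j, 1 ≤ j → 2 * j ≤ n → θ j ≤ A / (j : ℝ) ^ α
  ge_of_two_mul_le : ∀ j, 1 ≤ j → 2 * j ≤ n → a / (j : ℝ) ^ α ≤ θ j

namespace PowerLawProfile

variable {n : ℕ} {α a A u : ℝ} {θ : ℕ → ℝ}

theorem pos_of_mem_Icc_two (hθ : PowerLawProfile n α a A θ) : ∀ j ∈ Finset.Icc 2 n, 0 < θ j :=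
  fun j hj => hθ.pos j (Finset.Icc_subset_Icc_left one_le_two hj)

theorem eight_mul_lt_of_two_lt (hθ : PowerLawProfile n α a A θ) (hα0 : 0 ≤ α) (hα : α ≤ 1 / 2)
    (hu : 0 < u) (huA : u * A ≤ ((n : ℝ) / 2) ^ α) {j : ℕ} (hj : j ∈ Finset.Icc 2 n)
    (hbig : 2 < u * θ j) : 8 * j < n := by
  have key : ∀ i, 1 ≤ i → 2 * i ≤ n → 2 < u * θ i → 8 * i < n := by
    intro i hi1 hi2 hbig
    by_contra! h
    have hi : (0 : ℝ) < i := by exact_mod_cast hi1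
    have hx : (n : ℝ) / 2 / i ≤ 4 := by
      have : (n : ℝ) ≤ 8 * i := by exact_mod_cast h
      rw [div_le_iff₀ hi]
      linarith
    have : u * θ i ≤ 2 := calc
      u * θ i ≤ u * (A / (i : ℝ) ^ α) := by gcongr; exact hθ.le_of_two_mul_le i hi1 hi2
      _ = u * A / (i : ℝ) ^ α := mul_div_assoc .. |>.symm
      _ ≤ ((n : ℝ) / 2) ^ α / (i : ℝ) ^ α := by gcongr
      _ = ((n : ℝ) / 2 / i) ^ α := (div_rpow (by positivity) hi.le α).symm
      _ ≤ 4 ^ α := rpow_le_rpow (by positivity) hx hα0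
      _ ≤ 4 ^ (1 / 2 : ℝ) := rpow_le_rpow_of_exponent_le (by norm_num) hα
      _ = 2 := by rw [← sqrt_eq_rpow, show (4 : ℝ) = 2 ^ 2 by norm_num, sqrt_sq zero_le_two]
    linarith
  obtain ⟨hj2, hjn⟩ := Finset.mem_Icc.1 hj
  by_cases h : 2 * j ≤ n
  · exact key j (by omega) h hbig
  · -- `θ` is nonincreasing, so the index `⌊n/2⌋ ≤ j` is big as well
    have hq : 8 * (n / 2) < n := by
      refine key (n / 2) (by omega) (by omega) (hbig.trans_le ?_)
      gcongr
      exact hθ.antitoneOn ⟨by omega, by omega⟩ ⟨by omega, hjn⟩ (by omega)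
    omega

theorem weightedPhi_le_of_subset_Icc (hθ : PowerLawProfile n α a A θ) (hα0 : 0 ≤ α)
    (hα : α < 1 / 2) (hu : 0 < u) {t : Finset ℕ} {b : ℕ} (ht : t ⊆ Finset.Icc 2 b) (hb : 1 ≤ b)
    (hbn : 2 * b ≤ n) :
    weightedPhi t θ u ≤ A ^ 2 * b / ((1 - 2 * α) * ((b : ℝ) ^ α) ^ 2) := by
  have hpos : ∀ j ∈ Finset.Icc 2 b, 0 < θ j := fun j hj =>
    hθ.pos_of_mem_Icc_two j (Finset.Icc_subset_Icc_right (by omega) hj)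
  have hsq : ∀ {x : ℝ}, 0 ≤ x → x ^ (2 * α) = (x ^ α) ^ 2 := fun hx => by
    rw [mul_comm, ← rpow_natCast, ← rpow_mul hx]; norm_num
  have hb0 : (0 : ℝ) < b := by exact_mod_cast hb
  calc weightedPhi t θ u ≤ ∑ j ∈ t, θ j ^ 2 := weightedPhi_le_sum_sq (fun j hj => hpos j (ht hj)) hu
    _ ≤ ∑ j ∈ Finset.Icc 2 b, θ j ^ 2 :=
        Finset.sum_le_sum_of_subset_of_nonneg ht fun j _ _ => sq_nonneg _
    _ ≤ ∑ j ∈ Finset.Icc 2 b, A ^ 2 * (j : ℝ) ^ (-(2 * α)) := by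
        refine Finset.sum_le_sum fun j hj => ?_
        obtain ⟨hj2, hjb⟩ := Finset.mem_Icc.1 hj
        calc θ j ^ 2 ≤ (A / (j : ℝ) ^ α) ^ 2 :=
              pow_le_pow_left₀ (hpos j hj).le (hθ.le_of_two_mul_le j (by omega) (by omega)) 2
          _ = A ^ 2 * (j : ℝ) ^ (-(2 * α)) := by
              rw [rpow_neg (Nat.cast_nonneg j), hsq (Nat.cast_nonneg j)]; ring
    _ = A ^ 2 * ∑ j ∈ Finset.Icc 2 b, (j : ℝ) ^ (-(2 * α)) := (Finset.mul_sum ..).symm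
    _ ≤ A ^ 2 * ((b : ℝ) ^ (1 - 2 * α) / (1 - 2 * α)) := by
        gcongr; exact sum_Icc_two_rpow_neg_le (by linarith) (by linarith) hb
    _ = A ^ 2 * b / ((1 - 2 * α) * ((b : ℝ) ^ α) ^ 2) := by
        rw [rpow_sub hb0, rpow_one, hsq hb0.le]; field_simp

theorem le_weightedPhi_Ioc (hθ : PowerLawProfile n α a A θ) (hα0 : 0 ≤ α) (hα1 : α ≤ 1)
    (ha : 0 < a) (hu : 0 < u) {b : ℕ} (hb : 1 ≤ b) (hbn : 6 * b ≤ n) (hbbig : 2 < u * θ b)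
    (hsmall : ∀ j ∈ Finset.Ioc b (3 * b), u * θ j ≤ 2) :
    a ^ 3 * b / (27 * A * ((b : ℝ) ^ α) ^ 2) ≤ weightedPhi (Finset.Ioc b (3 * b)) θ u := by
  have hb0 : (0 : ℝ) < b := by exact_mod_cast hb
  have hbα : 0 < (b : ℝ) ^ α := rpow_pos_of_pos hb0 α
  have huA : 2 * (b : ℝ) ^ α < u * A := by
    have := hθ.le_of_two_mul_le b hb (by omega)
    calc 2 * (b : ℝ) ^ α < u * θ b * (b : ℝ) ^ α := by gcongr
      _ ≤ u * (A / (b : ℝ) ^ α) * (b : ℝ) ^ α := by gcongr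
      _ = u * A := by field_simp
  have hA : 0 < A := pos_of_mul_pos_right (by linarith) hu.le
  have hterm : ∀ j ∈ Finset.Ioc b (3 * b),
      u * a ^ 3 / (108 * ((b : ℝ) ^ α) ^ 3) ≤ θ j ^ 2 * phiKernel (u * θ j) := by
    intro j hj
    obtain ⟨hbj, hj3⟩ := Finset.mem_Ioc.1 hj
    have hj0 : (0 : ℝ) < j := by exact_mod_cast (show 0 < j by omega)
    have hjα : (j : ℝ) ^ α ≤ 3 * (b : ℝ) ^ α := calc
      (j : ℝ) ^ α ≤ (3 * b : ℝ) ^ α := rpow_le_rpow hj0.le (by exact_mod_cast hj3) hα0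
      _ = 3 ^ α * (b : ℝ) ^ α := mul_rpow (by norm_num) hb0.le
      _ ≤ 3 ^ (1 : ℝ) * (b : ℝ) ^ α :=
          mul_le_mul_of_nonneg_right (rpow_le_rpow_of_exponent_le (by norm_num) hα1) hbα.le
      _ = 3 * (b : ℝ) ^ α := by rw [rpow_one]
    have hθj : a / (3 * (b : ℝ) ^ α) ≤ θ j :=
      (div_le_div_of_nonneg_left ha.le (rpow_pos_of_pos hj0 α) hjα).trans
        (hθ.ge_of_two_mul_le j (by omega) (by omega))
    have hθj0 : 0 < θ j := hθ.pos j (Finset.mem_Icc.2 ⟨by omega, by omega⟩)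
    calc u * a ^ 3 / (108 * ((b : ℝ) ^ α) ^ 3) = u * (a / (3 * (b : ℝ) ^ α)) ^ 3 / 4 := by
          field_simp; ring
      _ ≤ u * θ j ^ 3 / 4 := by gcongr
      _ = θ j ^ 2 * (u * θ j / 4) := by ring
      _ ≤ θ j ^ 2 * phiKernel (u * θ j) := by
          gcongr; exact quarter_mul_le_phiKernel (mul_pos hu hθj0) (hsmall j hj)
  have hcard : (Finset.Ioc b (3 * b)).card = 2 * b := by rw [Nat.card_Ioc]; omega
  calc a ^ 3 * b / (27 * A * ((b : ℝ) ^ α) ^ 2)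
      = (2 * b) * (2 * (b : ℝ) ^ α / A * a ^ 3 / (108 * ((b : ℝ) ^ α) ^ 3)) := by
        field_simp; ring
    _ ≤ (2 * b) * (u * a ^ 3 / (108 * ((b : ℝ) ^ α) ^ 3)) := by
        gcongr; rw [div_le_iff₀ hA]; exact huA.le
    _ = (Finset.Ioc b (3 * b)).card • (u * a ^ 3 / (108 * ((b : ℝ) ^ α) ^ 3)) := by
        rw [hcard, nsmul_eq_mul]; push_cast; ring
    _ ≤ weightedPhi (Finset.Ioc b (3 * b)) θ u := Finset.card_nsmul_le_sum _ _ _ hterm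

theorem weightedPhi_big_le (hθ : PowerLawProfile n α a A θ) (hα0 : 0 < α) (hα : α < 1 / 2)
    (ha : 0 < a) (hA : 0 < A) (hu : 0 < u) (huA : u * A ≤ ((n : ℝ) / 2) ^ α) :
    weightedPhi {j ∈ Finset.Icc 2 n | ¬u * θ j ≤ 2} θ u ≤
      27 * (A / a) ^ 3 / (1 - 2 * α) * weightedPhi {j ∈ Finset.Icc 2 n | u * θ j ≤ 2} θ u := by
  have hpos := hθ.pos_of_mem_Icc_two
  have hK : 0 ≤ 27 * (A / a) ^ 3 / (1 - 2 * α) := div_nonneg (by positivity) (by linarith)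
  obtain hempty | hne := (Finset.Icc 2 n |>.filter fun j => ¬u * θ j ≤ 2).eq_empty_or_nonempty
  · rw [hempty]
    exact mul_nonneg hK (weightedPhi_nonneg (fun j hj => hpos j (Finset.mem_filter.1 hj).1) hu)
  set b := Finset.max' _ hne
  have hbmax : ∀ j ∈ Finset.Icc 2 n, ¬u * θ j ≤ 2 → j ≤ b := fun j hj hjbig =>
    Finset.le_max' _ j (Finset.mem_filter.2 ⟨hj, hjbig⟩)
  obtain ⟨hb, hbbig⟩ := Finset.mem_filter.1 (Finset.max'_mem _ hne)
  have h8b := hθ.eight_mul_lt_of_two_lt hα0.le hα.le hu huA hb (not_le.1 hbbig)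
  have hb2 := (Finset.mem_Icc.1 hb).1
  have hbig : weightedPhi {j ∈ Finset.Icc 2 n | ¬u * θ j ≤ 2} θ u ≤
      A ^ 2 * b / ((1 - 2 * α) * ((b : ℝ) ^ α) ^ 2) :=
    hθ.weightedPhi_le_of_subset_Icc hα0.le hα hu
      (fun j hj => Finset.mem_Icc.2 ⟨(Finset.mem_Icc.1 (Finset.mem_filter.1 hj).1).1,
        hbmax j (Finset.mem_filter.1 hj).1 (Finset.mem_filter.1 hj).2⟩) (by omega) (by omega)
  have hsmall : a ^ 3 * b / (27 * A * ((b : ℝ) ^ α) ^ 2) ≤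
      weightedPhi {j ∈ Finset.Icc 2 n | u * θ j ≤ 2} θ u := by
    have hsub : Finset.Ioc b (3 * b) ⊆ {j ∈ Finset.Icc 2 n | u * θ j ≤ 2} := fun j hj => by
      obtain ⟨hbj, hj3⟩ := Finset.mem_Ioc.1 hj
      have hjI : j ∈ Finset.Icc 2 n := Finset.mem_Icc.2 ⟨by omega, by omega⟩
      exact Finset.mem_filter.2 ⟨hjI, by_contra fun h => absurd (hbmax j hjI h) (by omega)⟩
    refine (hθ.le_weightedPhi_Ioc hα0.le (by linarith) ha hu (by omega) (by omega)
      (not_le.1 hbbig) fun j hj => (Finset.mem_filter.1 (hsub hj)).2).trans ?_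
    exact weightedPhi_subset_le (fun j hj => hpos j (Finset.mem_filter.1 hj).1) hsub hu
  calc _ ≤ A ^ 2 * b / ((1 - 2 * α) * ((b : ℝ) ^ α) ^ 2) := hbig
    _ = 27 * (A / a) ^ 3 / (1 - 2 * α) * (a ^ 3 * b / (27 * A * ((b : ℝ) ^ α) ^ 2)) := by
        have : 1 - 2 * α ≠ 0 := by linarith
        field_simp
    _ ≤ _ := by gcongr

end PowerLawProfile

theorem phiFn_eq_weightedPhi (τ : ℝ) (w : ℕ → ℕ → ℝ) (n : ℕ) (lam u : ℝ) :
    phiFn τ w n lam u = weightedPhi (Finset.Icc 2 n) (thetaSeq τ w n lam) u :=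
  Finset.sum_congr rfl fun _ _ => mul_div_assoc _ _ _

theorem mul_two_mul_div_le_div_two_rpow {x s A α u : ℝ} (hx : 0 ≤ x) (hs : 0 < s) (hA : 0 < A)
    (hu : u ≤ x ^ α * s / (A * 2 ^ (α + 1))) : u * (2 * A / s) ≤ (x / 2) ^ α := by
  rw [div_rpow hx zero_le_two]
  rw [rpow_add_one two_ne_zero] at hu
  calc u * (2 * A / s) ≤ x ^ α * s / (A * (2 ^ α * 2)) * (2 * A / s) := by gcongr
    _ = x ^ α / 2 ^ α := by field_simp

namespace Assumption23

variable {τ A₁ A₂ ν : ℝ} {θstar : ℕ → ℝ} {w : ℕ → ℕ → ℝ}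

theorem alphaExp_pos (h : Assumption23 τ A₁ A₂ ν θstar w) : 0 < alphaExp τ :=
  div_pos one_pos (by linarith [h.tau_gt])

theorem alphaExp_lt_half (h : Assumption23 τ A₁ A₂ ν θstar w) : alphaExp τ < 1 / 2 := by
  rw [alphaExp, div_lt_div_iff₀ (by linarith [h.tau_gt]) two_pos]
  linarith [h.tau_gt]

theorem sigma2_pos (h : Assumption23 τ A₁ A₂ ν θstar w) {n : ℕ} (hn : 2 ≤ n) :
    0 < sigma2 w n := by
  refine div_pos (Finset.sum_pos (fun i hi => ?_) ⟨2, Finset.mem_Icc.2 ⟨le_rfl, hn⟩⟩)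
    (by positivity)
  have := h.wpos n (by omega) i (Finset.mem_Icc.2 ⟨by linarith [(Finset.mem_Icc.1 hi).1],
    (Finset.mem_Icc.1 hi).2⟩)
  positivity

theorem powerLawProfile_thetaSeq (h : Assumption23 τ A₁ A₂ ν θstar w) {n : ℕ} (hn : 2 ≤ n)
    {lam : ℝ} (hlam0 : 0 ≤ lam) (hlam : lam ≤ (n : ℝ) ^ etaExp τ / 10) :
    PowerLawProfile n (alphaExp τ) (A₁ / √(sigma2 w n)) (2 * A₂ / √(sigma2 w n))
      (thetaSeq τ w n lam) := by
  set α := alphaExp τ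
  set s := √(sigma2 w n)
  set m := 1 + lam / (n : ℝ) ^ etaExp τ
  have hn0 : (0 : ℝ) < n := by exact_mod_cast (by omega : 0 < n)
  have hs : 0 < s := sqrt_pos.2 (h.sigma2_pos hn)
  have hm1 : 1 ≤ m := le_add_of_nonneg_right (by positivity)
  have hm2 : m ≤ 2 := by
    have : lam / (n : ℝ) ^ etaExp τ ≤ 1 := by
      rw [div_le_one (rpow_pos_of_pos hn0 _)]; linarith [rpow_pos_of_pos hn0 (etaExp τ)]
    linarith
  have hθ : ∀ j, thetaSeq τ w n lam j = m / ((n : ℝ) ^ α * s) * w n j := fun j => by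
    rw [thetaSeq]; ring
  have hpow : ∀ j : ℕ, ((n : ℝ) / j) ^ α = (n : ℝ) ^ α / (j : ℝ) ^ α := fun j =>
    div_rpow hn0.le (Nat.cast_nonneg j) α
  refine ⟨fun j hj => ?_, fun i hi j hj hij => ?_, fun j hj1 hj2 => ?_, fun j hj1 hj2 => ?_⟩
  · rw [hθ]; have := h.wpos n (by omega) j hj; positivity
  · rw [hθ, hθ]; gcongr; exact h.wmono n (by omega) i j hi.1 hij hj.2
  · have hw := h.wub n hn j hj1 hj2
    rw [hpow] at hw
    have hw0 := h.wpos n (by omega) j (Finset.mem_Icc.2 ⟨hj1, by omega⟩)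
    calc thetaSeq τ w n lam j ≤ 2 / ((n : ℝ) ^ α * s) * (A₂ * ((n : ℝ) ^ α / (j : ℝ) ^ α)) := by
          rw [hθ]; gcongr
      _ = 2 * A₂ / s / (j : ℝ) ^ α := by field_simp
  · have hw := h.wlb n hn j hj1 hj2
    rw [hpow] at hw
    calc A₁ / s / (j : ℝ) ^ α = 1 / ((n : ℝ) ^ α * s) * (A₁ * ((n : ℝ) ^ α / (j : ℝ) ^ α)) := by
          field_simp
      _ ≤ thetaSeq τ w n lam j := by
          have := h.A1_pos
          rw [hθ]; gcongr

end Assumption23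

/-- Under Assumption 2.3: there exist `C > 0`, `κ₀ ∈ (0,1/4)`, `n₀ ≥ 2`,
depending only on `(A₁, A₂, τ, ν)`, such that for all `n ≥ n₀`, `κ ∈ (0,κ₀]`, and
`(λ, u) ∈ I_κ^{(n),2}`:
`φ_λ(κu)/φ_λ(u) ≤ φ_λ((1−κ)u)/φ_λ(u) ≤ 1/(1+Cκ)`. -/
theorem phi_ratio_bounds (τ A₁ A₂ ν : ℝ) (θstar : ℕ → ℝ) (w : ℕ → ℕ → ℝ)
    (h23 : Assumption23 τ A₁ A₂ ν θstar w) :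
    ∃ C : ℝ, 0 < C ∧ ∃ κ₀ : ℝ, κ₀ ∈ Set.Ioo (0 : ℝ) (1 / 4) ∧ ∃ n₀ : ℕ, 2 ≤ n₀ ∧
      ∀ n : ℕ, n₀ ≤ n → ∀ κ : ℝ, 0 < κ → κ ≤ κ₀ →
        ∀ lam u : ℝ, 0 ≤ lam → lam ≤ (n : ℝ) ^ etaExp τ / 10 →
          2 * Real.sqrt (sigma2 w n) / (A₁ * κ) ≤ u →
          u ≤ (n : ℝ) ^ alphaExp τ * Real.sqrt (sigma2 w n) / (A₂ * 2 ^ (alphaExp τ + 1)) →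
          phiFn τ w n lam (κ * u) / phiFn τ w n lam u ≤
              phiFn τ w n lam ((1 - κ) * u) / phiFn τ w n lam u ∧
            phiFn τ w n lam ((1 - κ) * u) / phiFn τ w n lam u ≤ 1 / (1 + C * κ) := by
  have hα0 := h23.alphaExp_pos
  have hα := h23.alphaExp_lt_half
  have hA₁ := h23.A1_pos
  have hA₂ := h23.A2_pos
  set K := 27 * (2 * A₂ / A₁) ^ 3 / (1 - 2 * alphaExp τ)
  have hK : 0 ≤ K := div_nonneg (by positivity) (by linarith)
  refine ⟨2 / (9 * (1 + K)), by positivity, 1 / 5, ⟨by norm_num, by norm_num⟩, 2, le_rfl, ?_⟩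
  intro n hn κ hκ0 hκ lam u hlam0 hlam hul huu
  have hs : 0 < √(sigma2 w n) := sqrt_pos.2 (h23.sigma2_pos hn)
  have hu : 0 < u := lt_of_lt_of_le (by positivity) hul
  have hθ := h23.powerLawProfile_thetaSeq hn hlam0 hlam
  have hbig := hθ.weightedPhi_big_le hα0 hα (by positivity) (by positivity) hu
    (mul_two_mul_div_le_div_two_rpow (Nat.cast_nonneg n) hs hA₂ huu)
  rw [div_div_div_cancel_right₀ hs.ne'] at hbig
  simp only [phiFn_eq_weightedPhi]
  exact ratio_bounds_of_gap (weightedPhi_pos hθ.pos_of_mem_Icc_two ⟨2, by simp [hn]⟩ hu)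
    (by positivity) (weightedPhi_mono hθ.pos_of_mem_Icc_two (by positivity) (by nlinarith))
    (mul_weightedPhi_le_sub hθ.pos_of_mem_Icc_two hκ0 (by linarith) hu hK hbig)

end
end
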